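/- arXiv:2206.07517 — 13 statements merged into one kernel-verified Lean document; each statement's English description precedes it below -/
import Mathlib

section
/- Every k-hypergraph (V,H) with 1 ≤ k < |V| is either separable or equatable, but not both. Here separable means there exists a labeling x : V → ℝ such that H = {E ⊆ V : |E| = k and ∑_{v∈E} x(v) ≥ 0}, and equatable means there exists a nonzero labeling y : (k-subsets of V) → ℝ≥0 such that for every v ∈ V, the sum of y(E) over edges E ∈ H containing v equals the sum of y(F) over non-edges F ∉ H (with |F| = k) containing v. -/
/-!
Give each `k`-set `G` the signed indicator vector `±𝟙_G ∈ ℝ^V`, with sign `+` exactly when `G`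
is an edge. Since `k ≥ 1`, shifting all labels by a small constant makes a separating labeling
strict, so separability says that some linear functional is positive on every signed indicator,
while equatability says that a nontrivial nonnegative combination of them vanishes. These are the
two sides of Gordan's alternative, which follows from separating `0` from the (compact, convex)
image of the standard simplex by Hahn–Banach.
-/

open Finset

variable {V : Type*}

/-- A `k`-hypergraph `H` is separable if some vertex labeling `x : V → ℝ` has
`H` equal to the set of `k`-subsets with nonnegative label sum. -/
def SeparableHypergraph [Fintype V] [DecidableEq V] (k : ℕ) (H : Finset (Finset V)) : Prop :=
  ∃ x : V → ℝ, ∀ E : Finset V, E ∈ H ↔ E.card = k ∧ 0 ≤ ∑ v ∈ E, x v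

/-- A `k`-hypergraph `H` is equatable if some nonzero nonnegative labeling `y` of the
`k`-subsets of `V` has, for every vertex `v`, the sum of labels of edges containing `v`
equal to the sum of labels of non-edges containing `v`. -/
def EquatableHypergraph [Fintype V] [DecidableEq V] (k : ℕ) (H : Finset (Finset V)) : Prop :=
  ∃ y : Finset V → ℝ,
    (∀ G, 0 ≤ y G) ∧
    (∃ G ∈ (univ : Finset V).powersetCard k, y G ≠ 0) ∧
    ∀ v : V,
      ∑ E ∈ ((univ : Finset V).powersetCard k).filter (fun E => v ∈ E ∧ E ∈ H), y E =
      ∑ F ∈ ((univ : Finset V).powersetCard k).filter (fun F => v ∈ F ∧ F ∉ H), y F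

/-- A hypergraph is exchangeable if there are edges `E₁, E₂` and `v₁ ∈ E₁ \ E₂`,
`v₂ ∈ E₂ \ E₁` such that both sets obtained by exchanging `v₁` and `v₂` are non-edges. -/
def ExchangeableHypergraph [DecidableEq V] (H : Finset (Finset V)) : Prop :=
  ∃ E₁ ∈ H, ∃ E₂ ∈ H, ∃ v₁ ∈ E₁ \ E₂, ∃ v₂ ∈ E₂ \ E₁,
    insert v₂ (E₁.erase v₁) ∉ H ∧ insert v₁ (E₂.erase v₂) ∉ H

section Gordan

variable {E : Type*} [AddCommGroup E] [Module ℝ E] [TopologicalSpace E] {ι : Type*}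

theorem nonneg_combination_ne_zero_of_pos_functional {s : Finset ι} {a : ι → E}
    {f : StrongDual ℝ E} (hf : ∀ i ∈ s, 0 < f (a i)) {w : ι → ℝ} (hw0 : ∀ i, 0 ≤ w i)
    (hw : ∃ i ∈ s, w i ≠ 0) : ∑ i ∈ s, w i • a i ≠ 0 := by
  intro h
  have hpos : 0 < ∑ i ∈ s, w i * f (a i) := by
    obtain ⟨j, hj, hwj⟩ := hw
    exact sum_pos' (fun i hi => mul_nonneg (hw0 i) (hf i hi).le)
      ⟨j, hj, mul_pos ((hw0 j).lt_of_ne' hwj) (hf j hj)⟩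
  have := congrArg f h
  simp only [map_sum, map_smul, smul_eq_mul, map_zero] at this
  linarith

variable [IsTopologicalAddGroup E] [ContinuousSMul ℝ E] [LocallyConvexSpace ℝ E] [T2Space E]

theorem exists_pos_functional_or_stdSimplex_combination_eq_zero [Fintype ι] (a : ι → E) :
    (∃ f : StrongDual ℝ E, ∀ i, 0 < f (a i)) ∨
      ∃ w ∈ stdSimplex ℝ ι, ∑ i, w i • a i = 0 := by
  classical
  set L : (ι → ℝ) →ₗ[ℝ] E := Fintype.linearCombination ℝ a
  by_cases h0 : (0 : E) ∈ L '' stdSimplex ℝ ι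
  · obtain ⟨w, hw, hLw⟩ := h0
    exact Or.inr ⟨w, hw, by simpa [L, Fintype.linearCombination_apply] using hLw⟩
  · obtain ⟨f, u, v, hu, huv, hv⟩ := geometric_hahn_banach_closed_compact (convex_singleton 0)
      isClosed_singleton ((convex_stdSimplex ℝ ι).linear_image L)
      ((isCompact_stdSimplex ℝ ι).image L.continuous_of_finiteDimensional)
      (Set.disjoint_singleton_left.2 h0)
    refine Or.inl ⟨f, fun i => ?_⟩
    have hf0 : f 0 < u := hu 0 rfl
    have hai : v < f (a i) := hv _ ⟨Pi.single i 1, single_mem_stdSimplex ℝ i, by simp [L]⟩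
    rw [map_zero] at hf0
    linarith

theorem exists_pos_functional_or_exists_nonneg_combination_eq_zero (s : Finset ι) (a : ι → E) :
    (∃ f : StrongDual ℝ E, ∀ i ∈ s, 0 < f (a i)) ∨
      ∃ w : ι → ℝ, (∀ i, 0 ≤ w i) ∧ (∃ i ∈ s, w i ≠ 0) ∧ ∑ i ∈ s, w i • a i = 0 := by
  classical
  obtain ⟨f, hf⟩ | ⟨w, ⟨hw0, hw1⟩, hw⟩ :=
    exists_pos_functional_or_stdSimplex_combination_eq_zero (fun i : s => a i)
  · exact Or.inl ⟨f, fun i hi => hf ⟨i, hi⟩⟩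
  · set w' : ι → ℝ := fun i => if h : i ∈ s then w ⟨i, h⟩ else 0
    have hw' : ∀ i : s, w' i = w i := fun i => dif_pos i.2
    obtain ⟨i, -, hi⟩ := exists_ne_zero_of_sum_ne_zero (hw1.trans_ne one_ne_zero)
    refine Or.inr ⟨w', fun i => ?_, ⟨i, i.2, (hw' i).trans_ne hi⟩, ?_⟩
    · unfold w'; split_ifs <;> simp [hw0]
    · rw [← sum_coe_sort, ← hw]
      exact sum_congr rfl fun i _ => by rw [hw' i]

theorem gordan_alternative (s : Finset ι) (a : ι → E) :
    Xor (∃ f : StrongDual ℝ E, ∀ i ∈ s, 0 < f (a i))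
      (∃ w : ι → ℝ, (∀ i, 0 ≤ w i) ∧ (∃ i ∈ s, w i ≠ 0) ∧ ∑ i ∈ s, w i • a i = 0) :=
  (xor_iff_or_and_not_and _ _).2 ⟨exists_pos_functional_or_exists_nonneg_combination_eq_zero s a,
    fun ⟨⟨_, hf⟩, _, hw0, hw, hsum⟩ =>
      nonneg_combination_ne_zero_of_pos_functional hf hw0 hw hsum⟩

end Gordan

namespace Hypergraph

variable [DecidableEq V]

def edgeSign (H : Finset (Finset V)) (G : Finset V) : ℝ := if G ∈ H then 1 else -1

def signedIndicator (H : Finset (Finset V)) (G : Finset V) : V → ℝ :=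
  edgeSign H G • ∑ v ∈ G, Pi.single v 1

theorem signedIndicator_apply (H : Finset (Finset V)) (G : Finset V) (v : V) :
    signedIndicator H G v = if v ∈ G then edgeSign H G else 0 := by
  simp [signedIndicator, Finset.sum_apply, Pi.single_apply]

theorem map_signedIndicator (H : Finset (Finset V)) (G : Finset V) (f : StrongDual ℝ (V → ℝ)) :
    f (signedIndicator H G) = edgeSign H G * ∑ v ∈ G, f (Pi.single v 1) := by
  simp [signedIndicator]

theorem sum_smul_signedIndicator_apply (H : Finset (Finset V)) (s : Finset (Finset V))
    (y : Finset V → ℝ) (v : V) :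
    (∑ G ∈ s, y G • signedIndicator H G) v =
      ∑ E ∈ s.filter (fun E => v ∈ E ∧ E ∈ H), y E -
        ∑ F ∈ s.filter (fun F => v ∈ F ∧ F ∉ H), y F := by
  rw [sum_filter, sum_filter, ← sum_sub_distrib, Finset.sum_apply]
  refine sum_congr rfl fun G _ => ?_
  by_cases hv : v ∈ G <;> by_cases hG : G ∈ H <;> simp [signedIndicator_apply, edgeSign, hv, hG]

variable [Fintype V]

def StrictlySeparable (k : ℕ) (H : Finset (Finset V)) : Prop :=
  ∃ x : V → ℝ, ∀ G ∈ (univ : Finset V).powersetCard k, 0 < edgeSign H G * ∑ v ∈ G, x v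

theorem strictlySeparable_of_separable {k : ℕ} {H : Finset (Finset V)} (hk : 0 < k)
    (hs : SeparableHypergraph k H) : StrictlySeparable k H := by
  obtain ⟨x, hx⟩ := hs
  set N := ((univ : Finset V).powersetCard k).filter (· ∉ H)
  have hN : ∀ G ∈ N, ∑ v ∈ G, x v < 0 := fun G hG => by
    rw [mem_filter, mem_powersetCard_univ] at hG
    exact lt_of_not_ge fun h => hG.2 ((hx G).2 ⟨hG.1, h⟩)
  -- shift every label by `m / k`, where `0 < m < -x(F)` for every non-edge `F`
  obtain ⟨m, hm0, hmN⟩ := Order.exists_between_finsets {0} (N.image fun G => -∑ v ∈ G, x v)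
    (by simpa using fun G hG => neg_pos.2 (hN G hG))
  replace hm0 : 0 < m := hm0 0 (mem_singleton_self 0)
  refine ⟨fun v => x v + m / k, fun G hG => ?_⟩
  have hshift : ∑ v ∈ G, (x v + m / k) = ∑ v ∈ G, x v + m := by
    rw [sum_add_distrib, sum_const, mem_powersetCard_univ.1 hG, nsmul_eq_mul]
    field_simp
  rw [hshift, edgeSign]
  split_ifs with hGH
  · linarith [((hx G).1 hGH).2]
  · linarith [hmN _ (mem_image_of_mem _ (mem_filter.2 ⟨hG, hGH⟩))]

theorem separable_of_strictlySeparable {k : ℕ} {H : Finset (Finset V)} (hH : ∀ E ∈ H, E.card = k)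
    (hs : StrictlySeparable k H) : SeparableHypergraph k H := by
  obtain ⟨x, hx⟩ := hs
  refine ⟨x, fun E => ⟨fun hE => ?_, fun ⟨hcard, hsum⟩ => ?_⟩⟩
  · have := hx E (mem_powersetCard_univ.2 (hH E hE))
    rw [edgeSign, if_pos hE, one_mul] at this
    exact ⟨hH E hE, this.le⟩
  · by_contra hE
    have := hx E (mem_powersetCard_univ.2 hcard)
    rw [edgeSign, if_neg hE] at this
    linarith

theorem strictlySeparable_iff_exists_pos_functional {k : ℕ} {H : Finset (Finset V)} :
    StrictlySeparable k H ↔ ∃ f : StrongDual ℝ (V → ℝ),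
      ∀ G ∈ (univ : Finset V).powersetCard k, 0 < f (signedIndicator H G) := by
  simp only [map_signedIndicator]
  constructor
  · rintro ⟨x, hx⟩
    refine ⟨∑ v, x v • ContinuousLinearMap.proj v, fun G hG => ?_⟩
    simpa [Pi.single_apply] using hx G hG
  · rintro ⟨f, hf⟩
    exact ⟨fun v => f (Pi.single v 1), hf⟩

theorem equatable_iff_exists_nonneg_combination_eq_zero {k : ℕ} {H : Finset (Finset V)} :
    EquatableHypergraph k H ↔ ∃ y : Finset V → ℝ, (∀ G, 0 ≤ y G) ∧
      (∃ G ∈ (univ : Finset V).powersetCard k, y G ≠ 0) ∧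
      ∑ G ∈ (univ : Finset V).powersetCard k, y G • signedIndicator H G = 0 := by
  simp only [funext_iff, sum_smul_signedIndicator_apply, Pi.zero_apply, sub_eq_zero]
  rfl

end Hypergraph

theorem separable_xor_equatable_general [Fintype V] [DecidableEq V] (k : ℕ) (H : Finset (Finset V))
    (hk : 1 ≤ k) (hH : ∀ E ∈ H, E.card = k) :
    Xor' (SeparableHypergraph k H) (EquatableHypergraph k H) := by
  have hsep : SeparableHypergraph k H ↔ Hypergraph.StrictlySeparable k H :=
    ⟨Hypergraph.strictlySeparable_of_separable hk, Hypergraph.separable_of_strictlySeparable hH⟩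
  rw [hsep, Hypergraph.strictlySeparable_iff_exists_pos_functional,
    Hypergraph.equatable_iff_exists_nonneg_combination_eq_zero]
  exact gordan_alternative _ _

/-- Every k-hypergraph is either separable or equatable, but not both. -/
theorem separable_xor_equatable [Fintype V] [DecidableEq V] (k : ℕ) (H : Finset (Finset V))
    (hk : 1 ≤ k) (hkn : k < Fintype.card V) (hH : ∀ E ∈ H, E.card = k) :
    Xor' (SeparableHypergraph k H) (EquatableHypergraph k H) :=
  separable_xor_equatable_general k H hk hH
end

section
/- If a k-hypergraph (V,H) has edges E₁, E₂ ∈ H and non-edges F₁, F₂ ∉ H (all of size k) with E₁ ∩ E₂ = F₁ ∩ F₂ and E₁ ∪ E₂ = F₁ ∪ F₂, then (V,H) is equatable; moreover, there exists a {0,1}-valued labeling y of the k-subsets of V, with at most 4 nonzero values, satisfying the equatability condition. -/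
open Finset

variable {V : Type*}

/-- If there are edges E₁, E₂ and non-edges F₁, F₂ with equal intersections and equal
unions, then the hypergraph is equatable, with a 0,1 labeling with at most 4 nonzeros. -/
theorem equatable_of_sandwich [Fintype V] [DecidableEq V] (k : ℕ) (H : Finset (Finset V))
    (hk : 1 ≤ k) (hkn : k < Fintype.card V) (hH : ∀ E ∈ H, E.card = k)
    (E₁ E₂ F₁ F₂ : Finset V)
    (hE₁ : E₁ ∈ H) (hE₂ : E₂ ∈ H) (hF₁ : F₁ ∉ H) (hF₂ : F₂ ∉ H)
    (hF₁c : F₁.card = k) (hF₂c : F₂.card = k)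
    (hcap : E₁ ∩ E₂ = F₁ ∩ F₂) (hcup : E₁ ∪ E₂ = F₁ ∪ F₂) :
    EquatableHypergraph k H ∧
      ∃ y : Finset V → ℝ,
        (∀ G, y G = 0 ∨ y G = 1) ∧
        (((univ : Finset V).powersetCard k).filter (fun G => y G ≠ 0)).card ≤ 4 ∧
        (∃ G ∈ (univ : Finset V).powersetCard k, y G ≠ 0) ∧
        ∀ v : V,
          ∑ E ∈ ((univ : Finset V).powersetCard k).filter (fun E => v ∈ E ∧ E ∈ H), y E =
          ∑ F ∈ ((univ : Finset V).powersetCard k).filter (fun F => v ∈ F ∧ F ∉ H), y F := by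
  have hE₁F₁ : E₁ ≠ F₁ := fun h => hF₁ (h ▸ hE₁)
  have hE₁F₂ : E₁ ≠ F₂ := fun h => hF₂ (h ▸ hE₁)
  have hE₂F₁ : E₂ ≠ F₁ := fun h => hF₁ (h ▸ hE₂)
  have hE₂F₂ : E₂ ≠ F₂ := fun h => hF₂ (h ▸ hE₂)
  have hEE : E₁ ≠ E₂ := by
    intro h
    apply hF₁
    have hF₁E : F₁ = E₁ := by
      apply Finset.Subset.antisymm
      · calc F₁ ⊆ F₁ ∪ F₂ := Finset.subset_union_left
          _ = E₁ ∪ E₂ := hcup.symm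
          _ = E₁ := by rw [← h, Finset.union_self]
      · calc E₁ = E₁ ∩ E₂ := by rw [← h, Finset.inter_self]
          _ = F₁ ∩ F₂ := hcap
          _ ⊆ F₁ := Finset.inter_subset_left
    rw [hF₁E]; exact hE₁
  have hFF : F₁ ≠ F₂ := by
    intro h
    apply hF₁
    have hE₁F : E₁ = F₁ := by
      apply Finset.Subset.antisymm
      · calc E₁ ⊆ E₁ ∪ E₂ := Finset.subset_union_left
          _ = F₁ ∪ F₂ := hcup
          _ = F₁ := by rw [← h, Finset.union_self]
      · calc F₁ = F₁ ∩ F₂ := by rw [← h, Finset.inter_self]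
          _ = E₁ ∩ E₂ := hcap.symm
          _ ⊆ E₁ := Finset.inter_subset_left
    rw [← hE₁F]; exact hE₁
  set y : Finset V → ℝ := fun G =>
    (if G = E₁ then 1 else 0) + (if G = E₂ then 1 else 0) +
    (if G = F₁ then 1 else 0) + (if G = F₂ then 1 else 0) with hy
  have hy01 : ∀ G, y G = 0 ∨ y G = 1 := by
    intro G
    by_cases h1 : G = E₁
    · subst h1; right; simp [hy, hEE, hE₁F₁, hE₁F₂]
    by_cases h2 : G = E₂
    · subst h2; right; simp [hy, hEE.symm, hE₂F₁, hE₂F₂]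
    by_cases h3 : G = F₁
    · subst h3; right; simp [hy, hE₁F₁.symm, hE₂F₁.symm, hFF]
    by_cases h4 : G = F₂
    · subst h4; right; simp [hy, hE₁F₂.symm, hE₂F₂.symm, hFF.symm]
    · left; simp [hy, h1, h2, h3, h4]
  have hyE₁ : y E₁ = 1 := by simp [hy, hEE, hE₁F₁, hE₁F₂]
  have hE₁mem : E₁ ∈ (univ : Finset V).powersetCard k := by
    rw [Finset.mem_powersetCard_univ]; exact hH E₁ hE₁
  have hsum : ∀ s : Finset (Finset V), ∑ E ∈ s, y E =
      (if E₁ ∈ s then (1:ℝ) else 0) + (if E₂ ∈ s then 1 else 0) +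
      (if F₁ ∈ s then 1 else 0) + (if F₂ ∈ s then 1 else 0) := by
    intro s
    simp [hy, Finset.sum_add_distrib, Finset.sum_ite_eq' s]
  have hbal : ∀ v : V,
      ∑ E ∈ ((univ : Finset V).powersetCard k).filter (fun E => v ∈ E ∧ E ∈ H), y E =
      ∑ F ∈ ((univ : Finset V).powersetCard k).filter (fun F => v ∈ F ∧ F ∉ H), y F := by
    intro v
    rw [hsum, hsum]
    have hcapv : (v ∈ E₁ ∧ v ∈ E₂) ↔ (v ∈ F₁ ∧ v ∈ F₂) := by
      rw [← Finset.mem_inter, ← Finset.mem_inter, hcap]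
    have hcupv : (v ∈ E₁ ∨ v ∈ E₂) ↔ (v ∈ F₁ ∨ v ∈ F₂) := by
      rw [← Finset.mem_union, ← Finset.mem_union, hcup]
    have m1 : (E₁ ∈ ((univ : Finset V).powersetCard k).filter (fun E => v ∈ E ∧ E ∈ H))
        ↔ v ∈ E₁ := by
      simp [Finset.mem_filter, Finset.mem_powersetCard_univ, hH E₁ hE₁, hE₁]
    have m2 : (E₂ ∈ ((univ : Finset V).powersetCard k).filter (fun E => v ∈ E ∧ E ∈ H))
        ↔ v ∈ E₂ := by
      simp [Finset.mem_filter, Finset.mem_powersetCard_univ, hH E₂ hE₂, hE₂]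
    have m3 : (F₁ ∈ ((univ : Finset V).powersetCard k).filter (fun E => v ∈ E ∧ E ∈ H))
        = False := by
      simp [Finset.mem_filter, hF₁]
    have m4 : (F₂ ∈ ((univ : Finset V).powersetCard k).filter (fun E => v ∈ E ∧ E ∈ H))
        = False := by
      simp [Finset.mem_filter, hF₂]
    have n1 : (E₁ ∈ ((univ : Finset V).powersetCard k).filter (fun F => v ∈ F ∧ F ∉ H))
        = False := by
      simp [Finset.mem_filter, hE₁]
    have n2 : (E₂ ∈ ((univ : Finset V).powersetCard k).filter (fun F => v ∈ F ∧ F ∉ H))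
        = False := by
      simp [Finset.mem_filter, hE₂]
    have n3 : (F₁ ∈ ((univ : Finset V).powersetCard k).filter (fun F => v ∈ F ∧ F ∉ H))
        ↔ v ∈ F₁ := by
      simp [Finset.mem_filter, Finset.mem_powersetCard_univ, hF₁c, hF₁]
    have n4 : (F₂ ∈ ((univ : Finset V).powersetCard k).filter (fun F => v ∈ F ∧ F ∉ H))
        ↔ v ∈ F₂ := by
      simp [Finset.mem_filter, Finset.mem_powersetCard_univ, hF₂c, hF₂]
    simp only [m1, m2, m3, m4, n1, n2, n3, n4, if_false]
    by_cases h1 : v ∈ E₁ <;> by_cases h2 : v ∈ E₂ <;> by_cases h3 : v ∈ F₁ <;>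
      by_cases h4 : v ∈ F₂ <;> simp_all <;> tauto
  have hne : ∃ G ∈ (univ : Finset V).powersetCard k, y G ≠ 0 := by
    exact ⟨E₁, hE₁mem, by rw [hyE₁]; norm_num⟩
  refine ⟨⟨y, fun G => ?_, hne, hbal⟩, y, hy01, ?_, hne, hbal⟩
  · rcases hy01 G with h | h <;> rw [h] <;> norm_num
  · have hsub : ((univ : Finset V).powersetCard k).filter (fun G => y G ≠ 0) ⊆
        ({E₁, E₂, F₁, F₂} : Finset (Finset V)) := by
      intro G hG
      simp only [Finset.mem_filter] at hG
      simp only [Finset.mem_insert, Finset.mem_singleton]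
      by_contra hc
      push_neg at hc
      exact hG.2 (by simp [hy, hc.1, hc.2.1, hc.2.2.1, hc.2.2.2])
    calc _ ≤ ({E₁, E₂, F₁, F₂} : Finset (Finset V)).card := Finset.card_le_card hsub
      _ ≤ 4 := by
        apply le_trans (Finset.card_insert_le _ _)
        apply Nat.succ_le_succ
        apply le_trans (Finset.card_insert_le _ _)
        apply Nat.succ_le_succ
        apply le_trans (Finset.card_insert_le _ _)
        apply Nat.succ_le_succ
        simp
end

section
/- If a k-hypergraph (V,H) is exchangeable, then it is equatable. -/
open Finset

variable {V : Type*}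

/-- If a k-hypergraph is exchangeable then it is equatable. -/
theorem equatable_of_exchangeable [Fintype V] [DecidableEq V] (k : ℕ) (H : Finset (Finset V))
    (hk : 1 ≤ k) (hkn : k < Fintype.card V) (hH : ∀ E ∈ H, E.card = k)
    (hexch : ExchangeableHypergraph H) :
    EquatableHypergraph k H := by
  obtain ⟨E₁, hE₁, E₂, hE₂, v₁, hv₁, v₂, hv₂, hF₁, hF₂⟩ := hexch
  rw [mem_sdiff] at hv₁ hv₂
  obtain ⟨hv₁E₁, hv₁E₂⟩ := hv₁
  obtain ⟨hv₂E₂, hv₂E₁⟩ := hv₂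
  set F₁ : Finset V := insert v₂ (E₁.erase v₁) with hF₁def
  set F₂ : Finset V := insert v₁ (E₂.erase v₂) with hF₂def
  have hne : v₁ ≠ v₂ := fun h => hv₁E₂ (h ▸ hv₂E₂)
  have hcE₁ : E₁.card = k := hH E₁ hE₁
  have hcE₂ : E₂.card = k := hH E₂ hE₂
  have hcF₁ : F₁.card = k := by
    rw [hF₁def, card_insert_of_notMem (by simp [hv₂E₁]), card_erase_of_mem hv₁E₁, hcE₁]
    omega
  have hcF₂ : F₂.card = k := by
    rw [hF₂def, card_insert_of_notMem (by simp [hv₁E₂]), card_erase_of_mem hv₂E₂, hcE₂]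
    omega
  have hmemF₁ : ∀ v, v ∈ F₁ ↔ v = v₂ ∨ (v ∈ E₁ ∧ v ≠ v₁) := by
    intro v; simp [hF₁def, mem_insert, mem_erase, and_comm]
  have hmemF₂ : ∀ v, v ∈ F₂ ↔ v = v₁ ∨ (v ∈ E₂ ∧ v ≠ v₂) := by
    intro v; simp [hF₂def, mem_insert, mem_erase, and_comm]
  refine ⟨fun G => (if G = E₁ then 1 else 0) + (if G = E₂ then 1 else 0) +
      (if G = F₁ then 1 else 0) + (if G = F₂ then 1 else 0), ?_, ?_, ?_⟩
  · intro G; positivity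
  · refine ⟨E₁, by simp [mem_powersetCard, hcE₁], ?_⟩
    have h1 : (if E₁ = E₁ then (1:ℝ) else 0) = 1 := by simp
    have : (0:ℝ) < (if E₁ = E₁ then 1 else 0) + (if E₁ = E₂ then 1 else 0) +
        (if E₁ = F₁ then 1 else 0) + (if E₁ = F₂ then 1 else 0) := by
      rw [h1]; positivity
    exact ne_of_gt this
  · intro v
    rw [Finset.sum_add_distrib, Finset.sum_add_distrib, Finset.sum_add_distrib,
        Finset.sum_add_distrib, Finset.sum_add_distrib, Finset.sum_add_distrib]
    rw [Finset.sum_ite_eq' _ E₁, Finset.sum_ite_eq' _ E₂, Finset.sum_ite_eq' _ F₁,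
        Finset.sum_ite_eq' _ F₂, Finset.sum_ite_eq' _ E₁, Finset.sum_ite_eq' _ E₂,
        Finset.sum_ite_eq' _ F₁, Finset.sum_ite_eq' _ F₂]
    simp only [mem_filter, mem_powersetCard, subset_univ, true_and, hcE₁, hcE₂, hcF₁, hcF₂,
      hE₁, hE₂, hF₁, hF₂, and_true, not_true, and_false, if_false, not_false_iff]
    simp only [hmemF₁, hmemF₂]
    by_cases h1 : v = v₁ <;> by_cases h2 : v = v₂ <;>
      simp_all <;> by_cases h3 : v ∈ E₁ <;> by_cases h4 : v ∈ E₂ <;> simp_all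
end

section
/- A k-hypergraph (V,H) is exchangeable if and only if its complement (V, H̄) is exchangeable, where H̄ consists of all k-subsets of V not in H. -/
open Finset

variable {V : Type*}

/-!
Exchanging `v₁` and `v₂` is an involution on `k`-sets. If `E₁, E₂, v₁, v₂` witness that `H` is
exchangeable, then the exchanged sets `F₁, F₂` are non-edges, and `F₁, F₂, v₂, v₁` witness
that the complement is exchangeable, since exchanging back gives the edges `E₁, E₂`.
Applied to the complement, this gives the converse.
-/

section Exchange

variable [DecidableEq V] {E s : Finset V} {a b : V} {k : ℕ}

lemma insert_erase_mem_powersetCard (hE : E ∈ s.powersetCard k) (ha : a ∈ E) (hb : b ∉ E)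
    (hbs : b ∈ s) : insert b (E.erase a) ∈ s.powersetCard k := by
  rw [mem_powersetCard] at hE ⊢
  refine ⟨insert_subset hbs ((erase_subset a E).trans hE.1), ?_⟩
  rw [card_insert_of_notMem (fun h => hb (mem_of_mem_erase h)), card_erase_of_mem ha, ← hE.2]
  exact Nat.sub_add_cancel (card_pos.mpr ⟨a, ha⟩)

lemma insert_erase_insert_erase (ha : a ∈ E) (hb : b ∉ E) :
    insert a ((insert b (E.erase a)).erase b) = E := by
  rw [erase_insert (fun h => hb (mem_of_mem_erase h)), insert_erase ha]

lemma notMem_insert_erase (hab : a ≠ b) : b ∉ insert a (E.erase b) := by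
  simp [hab.symm]

lemma ExchangeableHypergraph.sdiff {H : Finset (Finset V)} (hH : H ⊆ s.powersetCard k)
    (hex : ExchangeableHypergraph H) : ExchangeableHypergraph (s.powersetCard k \ H) := by
  obtain ⟨E₁, hE₁, E₂, hE₂, v₁, hv₁, v₂, hv₂, hF₁, hF₂⟩ := hex
  rw [mem_sdiff] at hv₁ hv₂
  have hne : v₁ ≠ v₂ := fun h => hv₂.2 (h ▸ hv₁.1)
  have hv₁s : v₁ ∈ s := (mem_powersetCard.mp (hH hE₁)).1 hv₁.1
  have hv₂s : v₂ ∈ s := (mem_powersetCard.mp (hH hE₂)).1 hv₂.1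
  refine ⟨_, mem_sdiff.mpr ⟨insert_erase_mem_powersetCard (hH hE₁) hv₁.1 hv₂.2 hv₂s, hF₁⟩,
    _, mem_sdiff.mpr ⟨insert_erase_mem_powersetCard (hH hE₂) hv₂.1 hv₁.2 hv₁s, hF₂⟩,
    v₂, mem_sdiff.mpr ⟨mem_insert_self _ _, notMem_insert_erase hne⟩,
    v₁, mem_sdiff.mpr ⟨mem_insert_self _ _, notMem_insert_erase hne.symm⟩, ?_, ?_⟩
  · rw [insert_erase_insert_erase hv₁.1 hv₂.2]
    exact fun h => (mem_sdiff.mp h).2 hE₁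
  · rw [insert_erase_insert_erase hv₂.1 hv₁.2]
    exact fun h => (mem_sdiff.mp h).2 hE₂

end Exchange

theorem exchangeable_iff_compl_exchangeable_general [Fintype V] [DecidableEq V] (k : ℕ)
    (H : Finset (Finset V))
    (hH : ∀ E ∈ H, E.card = k) :
    ExchangeableHypergraph H ↔
      ExchangeableHypergraph ((univ : Finset V).powersetCard k \ H) := by
  have hsub : H ⊆ (univ : Finset V).powersetCard k := fun E hE =>
    mem_powersetCard_univ.mpr (hH E hE)
  refine ⟨ExchangeableHypergraph.sdiff hsub, fun hex => ?_⟩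
  rw [← Finset.sdiff_sdiff_eq_self hsub]
  exact hex.sdiff sdiff_subset

/-- A k-hypergraph is exchangeable iff its complement is exchangeable. -/
theorem exchangeable_iff_compl_exchangeable [Fintype V] [DecidableEq V] (k : ℕ)
    (H : Finset (Finset V))
    (hk : 1 ≤ k) (hkn : k < Fintype.card V) (hH : ∀ E ∈ H, E.card = k) :
    ExchangeableHypergraph H ↔
      ExchangeableHypergraph ((univ : Finset V).powersetCard k \ H) :=
  exchangeable_iff_compl_exchangeable_general k H hH
end

section
/- A k-hypergraph (V,H) is equatable if and only if its dual (V, H*) is equatable, where H* := {V \ E : E ∈ H}. -/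
open Finset

variable {V : Type*}

lemma equatable_key [Fintype V] [DecidableEq V] (k : ℕ) (y : Finset V → ℝ)
    (p : Finset V → Prop) [DecidablePred p] :
    ∑ v : V, ∑ E ∈ ((univ : Finset V).powersetCard k).filter (fun E => v ∈ E ∧ p E), y E =
      (k : ℝ) * ∑ E ∈ ((univ : Finset V).powersetCard k).filter p, y E := by
  have h1 : ∀ v : V, ((univ : Finset V).powersetCard k).filter (fun E => v ∈ E ∧ p E) =
      (((univ : Finset V).powersetCard k).filter p).filter (fun E => v ∈ E) := by
    intro v
    rw [Finset.filter_filter]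
    exact Finset.filter_congr fun E _ => by tauto
  simp_rw [h1, Finset.sum_filter]
  rw [Finset.sum_comm, Finset.mul_sum]
  refine Finset.sum_congr rfl fun E hE => ?_
  have hEc : E.card = k := Finset.mem_powersetCard_univ.mp hE
  by_cases hp : p E
  · simp only [hp, if_true]
    rw [Finset.sum_ite_mem, Finset.univ_inter, Finset.sum_const, ← hEc, nsmul_eq_mul]
  · simp [hp]

lemma equatable_dual_of_equatable [Fintype V] [DecidableEq V] {k : ℕ} {H : Finset (Finset V)}
    (hk : 1 ≤ k) (hkn : k ≤ Fintype.card V) (h : EquatableHypergraph k H) :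
    EquatableHypergraph (Fintype.card V - k) (H.image (fun E => Eᶜ)) := by
  classical
  obtain ⟨y, hy0, ⟨G, hG, hGne⟩, hsum⟩ := h
  have himg : ∀ F : Finset V, F ∈ H.image (fun E => Eᶜ) ↔ Fᶜ ∈ H := by
    intro F
    constructor
    · rintro hF
      obtain ⟨E, hE, rfl⟩ := Finset.mem_image.mp hF
      simpa using hE
    · intro hF
      exact Finset.mem_image.mpr ⟨Fᶜ, hF, compl_compl F⟩
  refine ⟨fun F => y Fᶜ, fun F => hy0 _, ⟨Gᶜ, ?_, ?_⟩, ?_⟩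
  · rw [Finset.mem_powersetCard_univ, Finset.card_compl,
      Finset.mem_powersetCard_univ.mp hG]
  · simpa using hGne
  · intro v
    -- total sums over H and its complement in card-k sets are equal
    have htotL := equatable_key (V := V) k y (fun E => E ∈ H)
    have htotR := equatable_key (V := V) k y (fun E => E ∉ H)
    have htot : ∑ E ∈ ((univ : Finset V).powersetCard k).filter (fun E => E ∈ H), y E =
        ∑ E ∈ ((univ : Finset V).powersetCard k).filter (fun E => E ∉ H), y E := by
      have := Finset.sum_congr rfl (fun v (_ : v ∈ (univ : Finset V)) => hsum v)
      rw [htotL, htotR] at this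
      have hk0 : (k : ℝ) ≠ 0 := Nat.cast_ne_zero.mpr (by omega)
      exact mul_left_cancel₀ hk0 this
    -- split each total by membership of v
    have hsplit : ∀ p : Finset V → Prop, ∀ _ : DecidablePred p,
        ∑ E ∈ ((univ : Finset V).powersetCard k).filter (fun E => v ∈ E ∧ p E), y E +
          ∑ E ∈ ((univ : Finset V).powersetCard k).filter (fun E => v ∉ E ∧ p E), y E =
        ∑ E ∈ ((univ : Finset V).powersetCard k).filter p, y E := by
      intro p _
      have h1 : ((univ : Finset V).powersetCard k).filter (fun E => v ∈ E ∧ p E) =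
          (((univ : Finset V).powersetCard k).filter p).filter (fun E => v ∈ E) := by
        rw [Finset.filter_filter]; exact Finset.filter_congr fun E _ => by tauto
      have h2 : ((univ : Finset V).powersetCard k).filter (fun E => v ∉ E ∧ p E) =
          (((univ : Finset V).powersetCard k).filter p).filter (fun E => v ∉ E) := by
        rw [Finset.filter_filter]; exact Finset.filter_congr fun E _ => by tauto
      rw [h1, h2, Finset.sum_filter_add_sum_filter_not]
    -- bijection between card-(n-k) sets containing v and card-k sets avoiding v
    have hbij : ∀ p : Finset V → Prop, ∀ _ : DecidablePred p,
        ∑ F ∈ ((univ : Finset V).powersetCard (Fintype.card V - k)).filter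
            (fun F => v ∈ F ∧ p Fᶜ), y Fᶜ =
        ∑ E ∈ ((univ : Finset V).powersetCard k).filter (fun E => v ∉ E ∧ p E), y E := by
      intro p _
      refine Finset.sum_nbij' (i := fun F => Fᶜ) (j := fun E => Eᶜ) ?_ ?_ ?_ ?_ ?_
      · intro F hF
        rw [Finset.mem_filter, Finset.mem_powersetCard_univ] at hF ⊢
        obtain ⟨hc, hv, hp⟩ := hF
        refine ⟨?_, by simpa using hv, hp⟩
        rw [Finset.card_compl, hc]; omega
      · intro E hE
        rw [Finset.mem_filter, Finset.mem_powersetCard_univ] at hE ⊢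
        obtain ⟨hc, hv, hp⟩ := hE
        refine ⟨?_, by simpa using hv, by rwa [compl_compl]⟩
        rw [Finset.card_compl, hc]
      · intro F _; exact compl_compl F
      · intro E _; exact compl_compl E
      · intro F _; rfl
    -- rewrite the dual filters in terms of complements
    have hfil1 : ((univ : Finset V).powersetCard (Fintype.card V - k)).filter
        (fun F => v ∈ F ∧ F ∈ H.image (fun E => Eᶜ)) =
        ((univ : Finset V).powersetCard (Fintype.card V - k)).filter
        (fun F => v ∈ F ∧ Fᶜ ∈ H) :=
      Finset.filter_congr fun F _ => by rw [himg]
    have hfil2 : ((univ : Finset V).powersetCard (Fintype.card V - k)).filter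
        (fun F => v ∈ F ∧ F ∉ H.image (fun E => Eᶜ)) =
        ((univ : Finset V).powersetCard (Fintype.card V - k)).filter
        (fun F => v ∈ F ∧ Fᶜ ∉ H) :=
      Finset.filter_congr fun F _ => by rw [himg]
    rw [hfil1, hfil2, hbij (fun E => E ∈ H) inferInstance,
      hbij (fun E => E ∉ H) inferInstance]
    have e1 := hsplit (fun E => E ∈ H) inferInstance
    have e2 := hsplit (fun E => E ∉ H) inferInstance
    have e3 := hsum v
    linarith

/-- A k-hypergraph is equatable iff its dual is equatable. -/
theorem equatable_iff_dual_equatable [Fintype V] [DecidableEq V] (k : ℕ)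
    (H : Finset (Finset V))
    (hk : 1 ≤ k) (hkn : k < Fintype.card V) (hH : ∀ E ∈ H, E.card = k) :
    EquatableHypergraph k H ↔
      EquatableHypergraph (Fintype.card V - k) (H.image (fun E => Eᶜ)) := by
  constructor
  · exact equatable_dual_of_equatable hk (le_of_lt hkn)
  · intro h
    have h1 : 1 ≤ Fintype.card V - k := by omega
    have h2 : Fintype.card V - k ≤ Fintype.card V := by omega
    have := equatable_dual_of_equatable h1 h2 h
    have hdd : (H.image (fun E => Eᶜ)).image (fun E => Eᶜ) = H := by
      rw [Finset.image_image]
      simpa using Finset.image_id (s := H)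
    have hkk : Fintype.card V - (Fintype.card V - k) = k := by omega
    rwa [hdd, hkk] at this
end

section
/- A 2-hypergraph (i.e. a graph) (V,H) is equatable if and only if it is exchangeable, i.e., if and only if there exist edges E₁, E₂ ∈ H and vertices v₁ ∈ E₁ \ E₂, v₂ ∈ E₂ \ E₁ such that (E₁ \ {v₁}) ∪ {v₂} ∉ H and (E₂ \ {v₂}) ∪ {v₁} ∉ H. -/
open Finset

variable {V : Type*}

set_option linter.unusedSectionVars false

section Helpers

variable [Fintype V] [DecidableEq V]

def nbr (H : Finset (Finset V)) (v : V) : Finset V :=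
  univ.filter (fun w => ({v, w} : Finset V) ∈ H)

lemma mem_nbr {H : Finset (Finset V)} {v w : V} :
    w ∈ nbr H v ↔ ({v, w} : Finset V) ∈ H := by simp [nbr]

lemma nbr_symm {H : Finset (Finset V)} {v w : V} :
    w ∈ nbr H v ↔ v ∈ nbr H w := by rw [mem_nbr, mem_nbr, Finset.pair_comm]

lemma not_mem_nbr_self {H : Finset (Finset V)} (hH : ∀ E ∈ H, E.card = 2) (v : V) :
    v ∉ nbr H v := by
  rw [mem_nbr]
  intro h
  have := hH _ h
  simp at this

lemma pair_of_mem {E : Finset V} {v : V} (hE : E.card = 2) (hv : v ∈ E) :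
    ∃ w, w ≠ v ∧ E = {v, w} := by
  obtain ⟨a, b, hab, rfl⟩ := Finset.card_eq_two.mp hE
  rcases Finset.mem_insert.mp hv with rfl | h
  · exact ⟨b, hab.symm, rfl⟩
  · rw [Finset.mem_singleton] at h; subst h
    exact ⟨a, hab, Finset.pair_comm _ _⟩

lemma edge_eq {H : Finset (Finset V)} (hH : ∀ E ∈ H, E.card = 2) {E : Finset V} {v : V}
    (hE : E ∈ H) (hv : v ∈ E) :
    ∃ w, w ≠ v ∧ w ∈ nbr H v ∧ E = {v, w} := by
  obtain ⟨w, hwv, hEw⟩ := pair_of_mem (hH E hE) hv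
  exact ⟨w, hwv, mem_nbr.mpr (hEw ▸ hE), hEw⟩

lemma erase_pair {v w : V} (h : w ≠ v) : ({v, w} : Finset V).erase v = {w} := by
  rw [show ({v, w} : Finset V) = insert v {w} from rfl,
    Finset.erase_insert (by simpa using h.symm)]

lemma key {H : Finset (Finset V)} (hH : ∀ E ∈ H, E.card = 2)
    (hEx : ¬ ExchangeableHypergraph H)
    {u w a b : V} (hau : a ∈ nbr H u) (haw : a ∉ nbr H w) (haw' : a ≠ w)
    (hbw : b ∈ nbr H w) (hbu : b ∉ nbr H u) (hbu' : b ≠ u) : False := by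
  apply hEx
  have hab : a ≠ b := fun h => haw (h ▸ hbw)
  have hau' : a ≠ u := fun h => not_mem_nbr_self hH u (h ▸ hau)
  have hbw' : b ≠ w := fun h => not_mem_nbr_self hH w (h ▸ hbw)
  refine ⟨{u, a}, mem_nbr.mp hau, {w, b}, mem_nbr.mp hbw, a, ?_, b, ?_, ?_, ?_⟩
  · simp [hab, haw']
  · simp [hbu', hab.symm]
  · rw [Finset.pair_comm u a, erase_pair hau'.symm]
    intro hmem
    exact hbu (mem_nbr.mpr (by rwa [Finset.pair_comm b u] at hmem))
  · rw [Finset.pair_comm w b, erase_pair hbw'.symm]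
    intro hmem
    exact haw (mem_nbr.mpr (by rwa [Finset.pair_comm a w] at hmem))

lemma exists_dominating {H : Finset (Finset V)} {s : Finset V}
    (hH : ∀ E ∈ H, E.card = 2) (hHs : ∀ E ∈ H, E ⊆ s)
    (hEx : ¬ ExchangeableHypergraph H)
    (hiso : ∀ v ∈ s, ∃ E ∈ H, v ∈ E) (hs : s.Nonempty) :
    ∃ u ∈ s, ∀ w ∈ s, w ≠ u → ({u, w} : Finset V) ∈ H := by
  obtain ⟨u, hus, hmax⟩ := s.exists_max_image (fun v => (nbr H v).card) hs
  refine ⟨u, hus, fun w hws hwu => ?_⟩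
  by_contra huw
  have hwu' : w ∉ nbr H u := fun h => huw (mem_nbr.mp h)
  have huw' : u ∉ nbr H w := fun h => hwu' (nbr_symm.mp h)
  -- Step 1 : nbr H w ⊆ nbr H u
  have hsub : nbr H w ⊆ nbr H u := by
    intro c hc
    by_contra hcu
    have hcu' : c ≠ u := fun h => huw' (h ▸ hc)
    have h1 : nbr H u ⊆ nbr H w := by
      intro a ha
      by_contra haw
      have haw' : a ≠ w := fun h => hwu' (h ▸ ha)
      exact key hH hEx ha haw haw' hc hcu hcu'
    have heq := Finset.eq_of_subset_of_card_le h1 (hmax w hws)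
    rw [heq] at hcu
    exact hcu hc
  -- Step 2 : w has a neighbor b, which is also a neighbor of u
  obtain ⟨E, hE, hwE⟩ := hiso w hws
  obtain ⟨b, hbw', hb, rfl⟩ := edge_eq hH hE hwE
  have hbs : b ∈ s := hHs _ hE (by simp)
  have hbu : b ∈ nbr H u := hsub hb
  have hbu' : b ≠ u := fun h => huw' (h ▸ hb)
  -- Step 3 : derive the contradiction
  have hwb : w ∈ nbr H b := nbr_symm.mp hb
  have h2 : (nbr H u).erase b ⊆ (nbr H b).erase u := by
    intro a ha
    rw [Finset.mem_erase] at ha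
    obtain ⟨hab, hau⟩ := ha
    rw [Finset.mem_erase]
    refine ⟨fun h => not_mem_nbr_self hH u (h ▸ hau), ?_⟩
    by_contra hab'
    exact key hH hEx hau hab' hab hwb hwu' hwu
  have hub : u ∈ nbr H b := nbr_symm.mp hbu
  have hcard : ((nbr H b).erase u).card ≤ ((nbr H u).erase b).card := by
    rw [Finset.card_erase_of_mem hub, Finset.card_erase_of_mem hbu]
    exact Nat.sub_le_sub_right (hmax b hbs) 1
  have heq2 := Finset.eq_of_subset_of_card_le h2 hcard
  have : w ∈ (nbr H u).erase b := heq2 ▸ Finset.mem_erase.mpr ⟨hwu, hwb⟩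
  exact hwu' (Finset.mem_erase.mp this).2

lemma sum_update_lt {x' : V → ℝ} {v u : V} (huv : u ≠ v) :
    Function.update x' v (-(1 + ∑ z, |x' z|)) u + Function.update x' v (-(1 + ∑ z, |x' z|)) v < 0 := by
  rw [Function.update_of_ne huv, Function.update_self]
  have h1 : |x' u| ≤ ∑ z, |x' z| :=
    Finset.single_le_sum (fun z _ => abs_nonneg (x' z)) (Finset.mem_univ u)
  have h2 : x' u ≤ |x' u| := le_abs_self _
  linarith

lemma sep_aux : ∀ (s : Finset V) (H : Finset (Finset V)), (∀ E ∈ H, E.card = 2) →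
    (∀ E ∈ H, E ⊆ s) → ¬ ExchangeableHypergraph H →
    ∃ x : V → ℝ, ∀ E : Finset V, E.card = 2 → E ⊆ s → (E ∈ H ↔ 0 ≤ ∑ v ∈ E, x v) := by
  intro s
  induction s using Finset.strongInduction with
  | _ s ih =>
    intro H hH hHs hEx
    rcases s.eq_empty_or_nonempty with rfl | hs
    · exact ⟨fun _ => 0, fun E hE2 hEs => by
        rw [Finset.subset_empty] at hEs; subst hEs; simp at hE2⟩
    by_cases hiso : ∃ v ∈ s, ∀ E ∈ H, v ∉ E
    · -- isolated vertex
      obtain ⟨v, hvs, hv⟩ := hiso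
      obtain ⟨x', hx'⟩ := ih (s.erase v) (Finset.erase_ssubset hvs) H hH
        (fun E hE a haE => Finset.mem_erase.mpr ⟨fun h => hv E hE (h ▸ haE), hHs E hE haE⟩)
        hEx
      refine ⟨Function.update x' v (-(1 + ∑ z, |x' z|)), fun E hE2 hEs => ?_⟩
      by_cases hvE : v ∈ E
      · obtain ⟨u, huv, rfl⟩ := pair_of_mem hE2 hvE
        rw [Finset.sum_pair (Ne.symm huv)]
        constructor
        · intro h; exact absurd (Finset.mem_insert_self v {u}) (hv _ h)
        · intro h
          have := sum_update_lt (x' := x') huv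
          linarith [this]
      · have hsum : ∑ u ∈ E, Function.update x' v (-(1 + ∑ z, |x' z|)) u = ∑ u ∈ E, x' u :=
          Finset.sum_congr rfl fun u hu => Function.update_of_ne (fun h => hvE (by rwa [h] at hu)) _ _
        rw [hsum]
        exact hx' E hE2 fun a ha => Finset.mem_erase.mpr ⟨fun h => hvE (h ▸ ha), hEs ha⟩
    · -- no isolated vertex: dominating vertex exists
      push_neg at hiso
      obtain ⟨u, hus, hdom⟩ := exists_dominating hH hHs hEx hiso hs
      set H' := H.filter (fun E => u ∉ E) with hH'def
      have hmemH' : ∀ {E : Finset V}, E ∈ H' ↔ E ∈ H ∧ u ∉ E := by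
        intro E; simp [hH'def]
      have hEx' : ¬ ExchangeableHypergraph H' := by
        rintro ⟨E₁, h1, E₂, h2, v₁, hv1, v₂, hv2, hn1, hn2⟩
        obtain ⟨h1H, h1u⟩ := hmemH'.mp h1
        obtain ⟨h2H, h2u⟩ := hmemH'.mp h2
        refine hEx ⟨E₁, h1H, E₂, h2H, v₁, hv1, v₂, hv2, ?_, ?_⟩
        · intro hmem
          refine hn1 (hmemH'.mpr ⟨hmem, ?_⟩)
          simp only [Finset.mem_insert, Finset.mem_erase]
          rintro (rfl | ⟨-, h⟩)
          · exact h2u (Finset.mem_sdiff.mp hv2).1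
          · exact h1u h
        · intro hmem
          refine hn2 (hmemH'.mpr ⟨hmem, ?_⟩)
          simp only [Finset.mem_insert, Finset.mem_erase]
          rintro (rfl | ⟨-, h⟩)
          · exact h1u (Finset.mem_sdiff.mp hv1).1
          · exact h2u h
      obtain ⟨x', hx'⟩ := ih (s.erase u) (Finset.erase_ssubset hus) H'
        (fun E hE => hH E (hmemH'.mp hE).1)
        (fun E hE a haE => Finset.mem_erase.mpr
          ⟨fun h => (hmemH'.mp hE).2 (h ▸ haE), hHs E (hmemH'.mp hE).1 haE⟩)
        hEx'
      refine ⟨Function.update x' u (1 + ∑ z, |x' z|), fun E hE2 hEs => ?_⟩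
      by_cases huE : u ∈ E
      · obtain ⟨w, hwu, rfl⟩ := pair_of_mem hE2 huE
        have hwE : w ∈ s := hEs (by simp)
        rw [Finset.sum_pair (Ne.symm hwu), Function.update_self,
          Function.update_of_ne hwu]
        have h1 : |x' w| ≤ ∑ z, |x' z| :=
          Finset.single_le_sum (fun z _ => abs_nonneg (x' z)) (Finset.mem_univ w)
        have h2 : -|x' w| ≤ x' w := neg_abs_le _
        exact iff_of_true (hdom w hwE hwu) (by linarith)
      · have hsum : ∑ w ∈ E, Function.update x' u (1 + ∑ z, |x' z|) w = ∑ w ∈ E, x' w :=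
          Finset.sum_congr rfl fun w hw => Function.update_of_ne (fun h => huE (by rwa [h] at hw)) _ _
        rw [hsum, ← hx' E hE2 (fun a ha => Finset.mem_erase.mpr ⟨fun h => huE (h ▸ ha), hEs ha⟩)]
        exact ⟨fun h => hmemH'.mpr ⟨h, huE⟩, fun h => (hmemH'.mp h).1⟩

lemma swap_sum {y : Finset V → ℝ} (x : V → ℝ) (Q : Finset (Finset V)) :
    ∑ v : V, x v * ∑ E ∈ Q.filter (fun E => v ∈ E), y E
      = ∑ E ∈ Q, (∑ v ∈ E, x v) * y E := by
  have h1 : ∀ v : V, x v * ∑ E ∈ Q.filter (fun E => v ∈ E), y E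
      = ∑ E ∈ Q, if v ∈ E then x v * y E else 0 := by
    intro v
    rw [Finset.mul_sum, Finset.sum_filter]
  simp_rw [h1]
  rw [Finset.sum_comm]
  refine Finset.sum_congr rfl fun E _ => ?_
  rw [Finset.sum_mul, ← Finset.sum_filter, Finset.filter_mem_eq_inter, Finset.univ_inter]

lemma sep_not_eq {H : Finset (Finset V)} (x : V → ℝ)
    (hx : ∀ E : Finset V, E ∈ H ↔ E.card = 2 ∧ 0 ≤ ∑ v ∈ E, x v) :
    ¬ EquatableHypergraph 2 H := by
  rintro ⟨y, hy0, ⟨G, hG, hGne⟩, hbal⟩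
  set P := (univ : Finset V).powersetCard 2 with hP
  set A := P.filter (fun E => E ∈ H) with hA
  set B := P.filter (fun E => E ∉ H) with hB
  have hfA : ∀ v : V, P.filter (fun E => v ∈ E ∧ E ∈ H) = A.filter (fun E => v ∈ E) := by
    intro v; rw [hA, Finset.filter_filter]
    exact Finset.filter_congr fun E _ => by tauto
  have hfB : ∀ v : V, P.filter (fun F => v ∈ F ∧ F ∉ H) = B.filter (fun E => v ∈ E) := by
    intro v; rw [hB, Finset.filter_filter]
    exact Finset.filter_congr fun E _ => by tauto
  have hSA : ∀ E ∈ A, 0 ≤ ∑ v ∈ E, x v := by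
    intro E hE
    rw [hA, Finset.mem_filter] at hE
    exact ((hx E).mp hE.2).2
  have hSB : ∀ F ∈ B, ∑ v ∈ F, x v < 0 := by
    intro F hF
    rw [hB, Finset.mem_filter, hP, Finset.mem_powersetCard_univ] at hF
    by_contra h
    exact hF.2 ((hx F).mpr ⟨hF.1, not_lt.mp h⟩)
  have hT : ∑ E ∈ A, (∑ v ∈ E, x v) * y E = ∑ F ∈ B, (∑ v ∈ F, x v) * y F := by
    rw [← swap_sum x A, ← swap_sum x B]
    refine Finset.sum_congr rfl fun v _ => ?_
    rw [← hfA, ← hfB]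
    rw [hbal v]
  have hTA : 0 ≤ ∑ E ∈ A, (∑ v ∈ E, x v) * y E :=
    Finset.sum_nonneg fun E hE => mul_nonneg (hSA E hE) (hy0 E)
  have hTB : ∀ F ∈ B, (∑ v ∈ F, x v) * y F ≤ 0 :=
    fun F hF => mul_nonpos_of_nonpos_of_nonneg (le_of_lt (hSB F hF)) (hy0 F)
  have hB0 : ∀ F ∈ B, y F = 0 := by
    have hzero : ∑ F ∈ B, (∑ v ∈ F, x v) * y F = 0 :=
      le_antisymm (Finset.sum_nonpos hTB) (hT ▸ hTA)
    intro F hF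
    have := (Finset.sum_eq_zero_iff_of_nonpos hTB).mp hzero F hF
    rcases mul_eq_zero.mp this with h | h
    · exact absurd h (ne_of_lt (hSB F hF))
    · exact h
  have hA0 : ∀ E ∈ A, y E = 0 := by
    intro E hE
    have hE2 : E.card = 2 := by
      rw [hA, Finset.mem_filter, hP, Finset.mem_powersetCard_univ] at hE; exact hE.1
    have : E.Nonempty := Finset.card_pos.mp (by omega)
    obtain ⟨v, hv⟩ := this
    have hL : ∑ E' ∈ A.filter (fun E' => v ∈ E'), y E' = 0 := by
      rw [← hfA, hbal v, hfB]
      exact Finset.sum_eq_zero fun F hF => hB0 F (Finset.mem_filter.mp hF).1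
    have := (Finset.sum_eq_zero_iff_of_nonneg (fun F _ => hy0 F)).mp hL E
      (Finset.mem_filter.mpr ⟨hE, hv⟩)
    exact this
  apply hGne
  by_cases hGH : G ∈ H
  · exact hA0 G (Finset.mem_filter.mpr ⟨hG, hGH⟩)
  · exact hB0 G (Finset.mem_filter.mpr ⟨hG, hGH⟩)

lemma pair_ne_l {x y z w : V} (h1 : x ≠ z) (h2 : x ≠ w) : ({x, y} : Finset V) ≠ {z, w} := by
  intro h
  have : x ∈ ({z, w} : Finset V) := h ▸ Finset.mem_insert_self x {y}
  simp [h1, h2] at this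

lemma pair_ne_r {x y z w : V} (h1 : y ≠ z) (h2 : y ≠ w) : ({x, y} : Finset V) ≠ {z, w} := by
  intro h
  have : y ∈ ({z, w} : Finset V) := h ▸ (by simp : y ∈ ({x, y} : Finset V))
  simp [h1, h2] at this

lemma exch_eq {H : Finset (Finset V)} (hH : ∀ E ∈ H, E.card = 2)
    (h : ExchangeableHypergraph H) : EquatableHypergraph 2 H := by
  obtain ⟨E₁, h1, E₂, h2, v₁, hv1, v₂, hv2, hn1, hn2⟩ := h
  rw [Finset.mem_sdiff] at hv1 hv2
  obtain ⟨hv1E, hv1n⟩ := hv1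
  obtain ⟨hv2E, hv2n⟩ := hv2
  obtain ⟨a, hav, haN, rfl⟩ := edge_eq hH h1 hv1E
  obtain ⟨b, hbv, hbN, rfl⟩ := edge_eq hH h2 hv2E
  rw [erase_pair hav] at hn1
  rw [erase_pair hbv] at hn2
  have hn1' : ({v₂, a} : Finset V) ∉ H := hn1
  have hn2' : ({v₁, b} : Finset V) ∉ H := hn2
  have hv12 : v₁ ≠ v₂ := fun h => hv1n (h ▸ Finset.mem_insert_self v₂ {b})
  have hv1b : v₁ ≠ b := fun h => hv1n (by simp [h])
  have hv2a : v₂ ≠ a := fun h => hv2n (by simp [h])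
  have hab : a ≠ b := by
    rintro rfl
    exact hn1' h2
  have ha1 : a ≠ v₁ := hav
  have hb2 : b ≠ v₂ := hbv
  refine ⟨fun G => (if G = ({v₁, a} : Finset V) then 1 else 0) +
      (if G = ({v₂, b} : Finset V) then 1 else 0) +
      (if G = ({v₂, a} : Finset V) then 1 else 0) +
      (if G = ({v₁, b} : Finset V) then 1 else 0), ?_, ?_, ?_⟩
  · intro G
    dsimp only
    have : ∀ A : Finset V, (0:ℝ) ≤ if G = A then 1 else 0 := fun A => by split <;> norm_num
    have g1 := this {v₁, a}; have g2 := this {v₂, b}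
    have g3 := this {v₂, a}; have g4 := this {v₁, b}
    linarith
  · refine ⟨{v₁, a}, Finset.mem_powersetCard_univ.mpr (Finset.card_pair ha1.symm), ?_⟩
    dsimp only
    rw [if_pos rfl, if_neg (pair_ne_l hv12 hv1b), if_neg (pair_ne_l hv12 ha1.symm),
      if_neg (pair_ne_r ha1 hab)]
    norm_num
  · intro v
    dsimp only
    rw [Finset.sum_add_distrib, Finset.sum_add_distrib, Finset.sum_add_distrib,
      Finset.sum_add_distrib, Finset.sum_add_distrib, Finset.sum_add_distrib]
    rw [Finset.sum_ite_eq', Finset.sum_ite_eq', Finset.sum_ite_eq', Finset.sum_ite_eq',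
      Finset.sum_ite_eq', Finset.sum_ite_eq', Finset.sum_ite_eq', Finset.sum_ite_eq']
    have hmem : ∀ (C : Finset V) (p : Finset V → Prop) [DecidablePred p],
        C ∈ (((univ : Finset V).powersetCard 2).filter (fun E => v ∈ E ∧ p E)) ↔
        (C.card = 2 ∧ v ∈ C ∧ p C) := by
      intro C p _
      rw [Finset.mem_filter, Finset.mem_powersetCard_univ]
    simp only [hmem]
    have c1 : ({v₁, a} : Finset V).card = 2 := Finset.card_pair ha1.symm
    have c2 : ({v₂, b} : Finset V).card = 2 := Finset.card_pair hb2.symm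
    have c3 : ({v₂, a} : Finset V).card = 2 := Finset.card_pair hv2a
    have c4 : ({v₁, b} : Finset V).card = 2 := Finset.card_pair hv1b
    simp only [c1, c2, c3, c4, h1, h2, hn1', hn2', not_false_eq_true, and_true, true_and,
      not_true, false_and, and_false, if_true, if_false, Finset.mem_insert,
      Finset.mem_singleton]
    by_cases e1 : v = v₁ <;> by_cases e2 : v = a <;> by_cases e3 : v = v₂ <;>
      by_cases e4 : v = b <;> simp_all

end Helpers

/-- A graph (2-hypergraph) is equatable iff it is exchangeable. -/
theorem graph_equatable_iff_exchangeable [Fintype V] [DecidableEq V]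
    (H : Finset (Finset V))
    (hn : 3 ≤ Fintype.card V) (hH : ∀ E ∈ H, E.card = 2) :
    EquatableHypergraph 2 H ↔ ExchangeableHypergraph H := by
  constructor
  · intro heq
    by_contra hEx
    obtain ⟨x, hx⟩ := sep_aux univ H hH (fun E _ => Finset.subset_univ E) hEx
    exact sep_not_eq x (fun E => ⟨fun hE => ⟨hH E hE, (hx E (hH E hE) (Finset.subset_univ E)).mp hE⟩,
      fun hE => (hx E hE.1 (Finset.subset_univ E)).mpr hE.2⟩) heq
  · exact exch_eq hH
end

section
/- A graph (V,H) is separable if and only if it is orderable, i.e., there is an ordering v₁, v₂, … of V such that each vⱼ is either isolated among its predecessors ({vᵢ,vⱼ} ∉ H for all i < j) or dominating among its predecessors ({vᵢ,vⱼ} ∈ H for all i < j). -/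
open Finset

variable {V : Type*}

/-! For graphs, separability by `x` says that a pair `{u, v}` of distinct vertices is an edge
iff `0 ≤ x u + x v`. Listing the vertices by increasing `|x v|`, with negative labels first among
equal absolute values, the sign of `x u + x v` for a predecessor `u` of `v` is the sign of `x v`,
so `v` dominates its predecessors if `x v ≥ 0` and is isolated among them otherwise. Conversely,
given such an ordering, the labels `±j` at the `j`-th vertex, positive exactly at dominating
vertices, separate the graph, since the later vertex of a pair has the larger absolute label. -/

lemma add_nonneg_iff_of_abs_lt {a b : ℝ} (h : |a| < |b|) : 0 ≤ a + b ↔ 0 ≤ b := by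
  constructor <;> intro hab <;> cases abs_cases a <;> cases abs_cases b <;> linarith

noncomputable def signKey (a : ℝ) : ℝ ×ₗ Bool := toLex (|a|, decide (0 ≤ a))

lemma add_nonneg_iff_of_signKey_le {a b : ℝ} (h : signKey a ≤ signKey b) :
    0 ≤ a + b ↔ 0 ≤ b := by
  rcases Prod.Lex.toLex_le_toLex.mp h with hlt | ⟨heq, hsign⟩
  · exact add_nonneg_iff_of_abs_lt hlt
  · simp only [Bool.le_iff_imp, decide_eq_true_eq] at hsign
    by_cases hb : 0 ≤ b
    · exact iff_of_true (by linarith [neg_abs_le a, abs_of_nonneg hb]) hb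
    · have ha := not_le.mp (mt hsign hb)
      exact iff_of_false (not_le.mpr (by linarith [not_le.mp hb])) hb

lemma exists_equiv_fin_monotone {α : Type*} [Fintype V] [LinearOrder α] (f : V → α) :
    ∃ e : Fin (Fintype.card V) ≃ V, Monotone (f ∘ e) := by
  let e₀ := (Fintype.equivFin V).symm
  exact ⟨(Tuple.sort (f ∘ e₀)).trans e₀, Tuple.monotone_sort (f ∘ e₀)⟩

lemma separableHypergraph_two_iff [Fintype V] [DecidableEq V] (H : Finset (Finset V)) :
    SeparableHypergraph 2 H ↔ (∀ E ∈ H, E.card = 2) ∧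
      ∃ x : V → ℝ, ∀ u v, u ≠ v → (({u, v} : Finset V) ∈ H ↔ 0 ≤ x u + x v) := by
  constructor
  · rintro ⟨x, hx⟩
    refine ⟨fun E hE => ((hx E).mp hE).1, x, fun u v huv => ?_⟩
    rw [hx, card_pair huv, sum_pair huv]
    exact and_iff_right rfl
  · rintro ⟨hH, x, hx⟩
    refine ⟨x, fun E => ?_⟩
    by_cases hE : E.card = 2
    · obtain ⟨u, v, huv, rfl⟩ := card_eq_two.mp hE
      rw [hx u v huv, card_pair huv, sum_pair huv]
      exact (and_iff_right rfl).symm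
    · exact iff_of_false (fun h => hE (hH E h)) (fun h => hE h.1)

def IsIsolatedOrDominatingOrder [DecidableEq V] (H : Finset (Finset V)) {n : ℕ} (e : Fin n ≃ V) :
    Prop :=
  ∀ j, (∀ i, i < j → ({e i, e j} : Finset V) ∉ H) ∨ (∀ i, i < j → ({e i, e j} : Finset V) ∈ H)

lemma exists_isIsolatedOrDominatingOrder_of_pair_mem_iff [Fintype V] [DecidableEq V] {H : Finset (Finset V)}
    {x : V → ℝ} (hx : ∀ u v, u ≠ v → (({u, v} : Finset V) ∈ H ↔ 0 ≤ x u + x v)) :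
    ∃ e : Fin (Fintype.card V) ≃ V, IsIsolatedOrDominatingOrder H e := by
  obtain ⟨e, he⟩ := exists_equiv_fin_monotone (signKey ∘ x)
  refine ⟨e, fun j => ?_⟩
  have hmem : ∀ i, i < j → (({e i, e j} : Finset V) ∈ H ↔ 0 ≤ x (e j)) := fun i hij =>
    (hx _ _ (e.injective.ne hij.ne)).trans (add_nonneg_iff_of_signKey_le (he hij.le))
  by_cases hj : 0 ≤ x (e j)
  · exact Or.inr fun i hij => (hmem i hij).mpr hj
  · exact Or.inl fun i hij => mt (hmem i hij).mp hj

lemma IsIsolatedOrDominatingOrder.exists_pair_mem_iff [DecidableEq V] {H : Finset (Finset V)}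
    {n : ℕ} {e : Fin n ≃ V} (hord : IsIsolatedOrDominatingOrder H e) :
    ∃ x : V → ℝ, ∀ u v, u ≠ v → (({u, v} : Finset V) ∈ H ↔ 0 ≤ x u + x v) := by
  let label : Fin n → ℝ := fun j =>
    if ∀ i, i < j → ({e i, e j} : Finset V) ∈ H then j else -j
  have habs : ∀ j, |label j| = j := by
    intro j
    unfold label
    split_ifs <;> simp
  have hlt : ∀ i j, i < j → (({e i, e j} : Finset V) ∈ H ↔ 0 ≤ label i + label j) := by
    intro i j hij
    rw [add_nonneg_iff_of_abs_lt (by rw [habs, habs]; exact_mod_cast hij)]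
    rcases hord j with hiso | hdom
    · have hj : (0 : ℝ) < j := by exact_mod_cast i.val.zero_le.trans_lt hij
      have : ¬ ∀ i, i < j → ({e i, e j} : Finset V) ∈ H := fun h => hiso i hij (h i hij)
      simp only [label, if_neg this]
      exact iff_of_false (hiso i hij) (by linarith)
    · simp only [label, if_pos hdom]
      exact iff_of_true (hdom i hij) j.val.cast_nonneg
  refine ⟨label ∘ e.symm, fun u v huv => ?_⟩
  rcases lt_or_gt_of_ne (e.symm.injective.ne huv) with h | h
  · simpa using hlt _ _ h
  · simpa [pair_comm, add_comm] using hlt _ _ h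

theorem graph_separable_iff_orderable_general [Fintype V] [DecidableEq V]
    (H : Finset (Finset V))
    (hH : ∀ E ∈ H, E.card = 2) :
    SeparableHypergraph 2 H ↔
      ∃ e : Fin (Fintype.card V) ≃ V, ∀ j : Fin (Fintype.card V),
        (∀ i, i < j → ({e i, e j} : Finset V) ∉ H) ∨
        (∀ i, i < j → ({e i, e j} : Finset V) ∈ H) := by
  rw [separableHypergraph_two_iff, and_iff_right hH]
  exact ⟨fun ⟨_, hx⟩ => exists_isIsolatedOrDominatingOrder_of_pair_mem_iff hx,
    fun ⟨_, hord⟩ => IsIsolatedOrDominatingOrder.exists_pair_mem_iff hord⟩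

/-- A graph is separable iff it is orderable: there is an ordering of the vertices in
which every vertex is isolated or dominating among its predecessors. -/
theorem graph_separable_iff_orderable [Fintype V] [DecidableEq V]
    (H : Finset (Finset V))
    (hn : 3 ≤ Fintype.card V) (hH : ∀ E ∈ H, E.card = 2) :
    SeparableHypergraph 2 H ↔
      ∃ e : Fin (Fintype.card V) ≃ V, ∀ j : Fin (Fintype.card V),
        (∀ i, i < j → ({e i, e j} : Finset V) ∉ H) ∨
        (∀ i, i < j → ({e i, e j} : Finset V) ∈ H) :=
  graph_separable_iff_orderable_general H hH
end

section
/- A k-partite hypergraph (V = V₁ ⊎ ⋯ ⊎ V_k, H) is equatable if and only if it is exchangeable. -/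
open Finset

variable {V : Type*}

section AuxLemmas

lemma edge_card_aux [DecidableEq V] {k : ℕ} {P : Fin k → Finset V}
    (hdisj : ∀ i j, i ≠ j → Disjoint (P i) (P j))
    (hcover : ∀ v : V, ∃ i, v ∈ P i)
    {E : Finset V} (hE : ∀ i, (E ∩ P i).card = 1) : E.card = k := by
  have hEq : E = (univ : Finset (Fin k)).biUnion (fun i => E ∩ P i) := by
    ext v
    simp only [mem_biUnion, mem_univ, mem_inter, true_and]
    constructor
    · intro hv; obtain ⟨i, hi⟩ := hcover v; exact ⟨i, hv, hi⟩
    · rintro ⟨i, hv, _⟩; exact hv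
  rw [hEq, card_biUnion]
  · simp [hE]
  · intro i _ j _ hij
    exact ((hdisj i j hij).mono inter_subset_right inter_subset_right)

lemma double_sum [Fintype V] [DecidableEq V] (x : V → ℝ) (y : Finset V → ℝ)
    (T : Finset (Finset V)) :
    ∑ v : V, x v * ∑ E ∈ T.filter (fun E => v ∈ E), y E =
    ∑ E ∈ T, y E * ∑ v ∈ E, x v := by
  simp_rw [Finset.sum_filter, Finset.mul_sum, mul_ite, mul_zero]
  rw [Finset.sum_comm]
  refine Finset.sum_congr rfl fun E _ => ?_
  rw [← Finset.sum_filter]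
  have : univ.filter (fun v => v ∈ E) = E := by ext v; simp
  rw [this]
  refine Finset.sum_congr rfl fun v _ => mul_comm _ _



section
variable [DecidableEq V] {k : ℕ} {P : Fin k → Finset V} {H : Finset (Finset V)}

lemma parts_eq (hcover : ∀ v : V, ∃ i, v ∈ P i) {E₁ E₂ : Finset V}
    (h : ∀ i, E₁ ∩ P i = E₂ ∩ P i) : E₁ = E₂ := by
  ext v
  constructor <;> intro hv <;> obtain ⟨i, hi⟩ := hcover v
  · have : v ∈ E₂ ∩ P i := h i ▸ mem_inter.2 ⟨hv, hi⟩
    exact (mem_inter.1 this).1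
  · have : v ∈ E₁ ∩ P i := (h i).symm ▸ mem_inter.2 ⟨hv, hi⟩
    exact (mem_inter.1 this).1

lemma swap_not_edge (hdisj : ∀ i j, i ≠ j → Disjoint (P i) (P j))
    (hH : ∀ E ∈ H, ∀ i, (E ∩ P i).card = 1)
    {E₁ : Finset V} (hE₁ : E₁ ∈ H) {i j : Fin k} (hij : i ≠ j)
    {v₁ v₂ : V} (hv₁ : v₁ ∈ P i) (hv₂ : v₂ ∈ P j) (hv₂E : v₂ ∉ E₁) :
    insert v₂ (E₁.erase v₁) ∉ H := by
  intro hF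
  obtain ⟨w, hw⟩ := Finset.card_eq_one.1 (hH E₁ hE₁ j)
  have hwE : w ∈ E₁ ∧ w ∈ P j := mem_inter.1 (hw ▸ Finset.mem_singleton_self w)
  have hwv₁ : w ≠ v₁ := by
    rintro rfl
    exact Finset.disjoint_left.1 (hdisj i j hij) hv₁ hwE.2
  have hwv₂ : w ≠ v₂ := fun h => hv₂E (h ▸ hwE.1)
  have hwF : w ∈ insert v₂ (E₁.erase v₁) := mem_insert.2 (Or.inr (mem_erase.2 ⟨hwv₁, hwE.1⟩))
  have hv₂F : v₂ ∈ insert v₂ (E₁.erase v₁) := mem_insert_self _ _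
  have hsub : {w, v₂} ⊆ insert v₂ (E₁.erase v₁) ∩ P j := by
    intro u hu
    rcases Finset.mem_insert.1 hu with rfl | hu
    · exact mem_inter.2 ⟨hwF, hwE.2⟩
    · rw [Finset.mem_singleton] at hu; subst hu
      exact mem_inter.2 ⟨hv₂F, hv₂⟩
  have h2 : 2 ≤ (insert v₂ (E₁.erase v₁) ∩ P j).card := by
    calc 2 = ({w, v₂} : Finset V).card := (Finset.card_pair hwv₂).symm
    _ ≤ _ := Finset.card_le_card hsub
  rw [hH _ hF j] at h2
  omega

lemma twodiff_exch (hdisj : ∀ i j, i ≠ j → Disjoint (P i) (P j))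
    (hH : ∀ E ∈ H, ∀ i, (E ∩ P i).card = 1)
    {E₁ E₂ : Finset V} (hE₁ : E₁ ∈ H) (hE₂ : E₂ ∈ H) {i j : Fin k} (hij : i ≠ j)
    (hdi : E₁ ∩ P i ≠ E₂ ∩ P i) (hdj : E₁ ∩ P j ≠ E₂ ∩ P j) :
    ExchangeableHypergraph H := by
  obtain ⟨v₁, hv₁⟩ := Finset.card_eq_one.1 (hH E₁ hE₁ i)
  obtain ⟨v₂, hv₂⟩ := Finset.card_eq_one.1 (hH E₂ hE₂ j)
  have hv₁E₁ : v₁ ∈ E₁ ∧ v₁ ∈ P i := mem_inter.1 (hv₁ ▸ Finset.mem_singleton_self v₁)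
  have hv₂E₂ : v₂ ∈ E₂ ∧ v₂ ∈ P j := mem_inter.1 (hv₂ ▸ Finset.mem_singleton_self v₂)
  have hv₁E₂ : v₁ ∉ E₂ := by
    intro h
    obtain ⟨w, hw⟩ := Finset.card_eq_one.1 (hH E₂ hE₂ i)
    have : v₁ ∈ E₂ ∩ P i := mem_inter.2 ⟨h, hv₁E₁.2⟩
    rw [hw, Finset.mem_singleton] at this
    exact hdi (by rw [hv₁, hw, this])
  have hv₂E₁ : v₂ ∉ E₁ := by
    intro h
    obtain ⟨w, hw⟩ := Finset.card_eq_one.1 (hH E₁ hE₁ j)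
    have : v₂ ∈ E₁ ∩ P j := mem_inter.2 ⟨h, hv₂E₂.2⟩
    rw [hw, Finset.mem_singleton] at this
    exact hdj (by rw [hv₂, hw, this])
  refine ⟨E₁, hE₁, E₂, hE₂, v₁, mem_sdiff.2 ⟨hv₁E₁.1, hv₁E₂⟩,
    v₂, mem_sdiff.2 ⟨hv₂E₂.1, hv₂E₁⟩, ?_, ?_⟩
  · exact swap_not_edge hdisj hH hE₁ hij hv₁E₁.2 hv₂E₂.2 hv₂E₁
  · exact swap_not_edge hdisj hH hE₂ hij.symm hv₂E₂.2 hv₁E₁.2 hv₁E₂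

/-- Structure of non-exchangeable nonempty k-partite hypergraphs. -/
lemma nonexch_structure (hdisj : ∀ i j, i ≠ j → Disjoint (P i) (P j))
    (hcover : ∀ v : V, ∃ i, v ∈ P i)
    (hH : ∀ E ∈ H, ∀ i, (E ∩ P i).card = 1)
    (hk : 1 ≤ k)
    (hEcard : ∀ E ∈ H, E.card = k)
    (hne : H.Nonempty) (hnex : ¬ ExchangeableHypergraph H) :
    ∃ A S : Finset V, Disjoint A S ∧ A.card = k - 1 ∧
      ∀ E, E ∈ H ↔ ∃ v ∈ S, E = insert v A := by
  obtain ⟨E₀, hE₀⟩ := hne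
  by_cases hone : ∀ E ∈ H, E = E₀
  · have hE₀ne : E₀.Nonempty := by
      rw [← Finset.card_pos, hEcard E₀ hE₀]; omega
    obtain ⟨v₀, hv₀⟩ := hE₀ne
    refine ⟨E₀.erase v₀, {v₀}, ?_, ?_, ?_⟩
    · simp [Finset.disjoint_singleton_right]
    · rw [Finset.card_erase_of_mem hv₀, hEcard E₀ hE₀]
    · intro E
      constructor
      · intro hE
        exact ⟨v₀, Finset.mem_singleton_self v₀, by
          rw [hone E hE, Finset.insert_erase hv₀]⟩
      · rintro ⟨v, hv, rfl⟩
        rw [Finset.mem_singleton] at hv; subst hv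
        rw [Finset.insert_erase hv₀]; exact hE₀
  · push_neg at hone
    obtain ⟨E₁, hE₁, hE₁ne⟩ := hone
    have hdiff : ∃ i, E₁ ∩ P i ≠ E₀ ∩ P i := by
      by_contra h
      push_neg at h
      exact hE₁ne (parts_eq hcover h)
    obtain ⟨i, hi⟩ := hdiff
    -- every edge agrees with E₀ outside part i
    have hagree : ∀ E ∈ H, ∀ j, j ≠ i → E ∩ P j = E₀ ∩ P j := by
      intro E hE j hji
      by_contra hd
      have hEi : E ∩ P i = E₀ ∩ P i := by
        by_contra hd2
        exact hnex (twodiff_exch hdisj hH hE hE₀ (Ne.symm hji) hd2 hd)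
      have hE₁j : E₁ ∩ P j = E₀ ∩ P j := by
        by_contra hd2
        exact hnex (twodiff_exch hdisj hH hE₁ hE₀ (Ne.symm hji) hi hd2)
      refine hnex (twodiff_exch hdisj hH hE hE₁ (Ne.symm hji) ?_ ?_)
      · rw [hEi]; exact fun h => hi h.symm
      · rw [hE₁j]; exact hd
    set A := E₀ \ P i with hA
    have hsdiff : ∀ E ∈ H, E \ P i = A := by
      intro E hE
      ext u
      simp only [hA, Finset.mem_sdiff]
      constructor
      · rintro ⟨huE, huP⟩
        obtain ⟨j, hj⟩ := hcover u
        have hji : j ≠ i := fun h => huP (h ▸ hj)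
        have : u ∈ E₀ ∩ P j := hagree E hE j hji ▸ mem_inter.2 ⟨huE, hj⟩
        exact ⟨(mem_inter.1 this).1, huP⟩
      · rintro ⟨huE, huP⟩
        obtain ⟨j, hj⟩ := hcover u
        have hji : j ≠ i := fun h => huP (h ▸ hj)
        have : u ∈ E ∩ P j := (hagree E hE j hji).symm ▸ mem_inter.2 ⟨huE, hj⟩
        exact ⟨(mem_inter.1 this).1, huP⟩
    have hedge_form : ∀ E ∈ H, ∃ v ∈ P i, E = insert v A ∧ v ∈ P i := by
      intro E hE
      obtain ⟨v, hv⟩ := Finset.card_eq_one.1 (hH E hE i)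
      have hvE : v ∈ E ∧ v ∈ P i := mem_inter.1 (hv ▸ Finset.mem_singleton_self v)
      refine ⟨v, hvE.2, ?_, hvE.2⟩
      ext u
      simp only [Finset.mem_insert]
      constructor
      · intro hu
        by_cases hup : u ∈ P i
        · left
          have : u ∈ E ∩ P i := mem_inter.2 ⟨hu, hup⟩
          rw [hv, Finset.mem_singleton] at this; exact this
        · right; rw [← hsdiff E hE]; exact mem_sdiff.2 ⟨hu, hup⟩
      · rintro (rfl | hu)
        · exact hvE.1
        · rw [← hsdiff E hE] at hu; exact (mem_sdiff.1 hu).1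
    refine ⟨A, (P i).filter (fun v => insert v A ∈ H), ?_, ?_, ?_⟩
    · refine Finset.disjoint_left.2 fun u hu hu' => ?_
      exact (Finset.mem_sdiff.1 hu).2 (Finset.mem_of_mem_filter u hu')
    · have : A = E₀ \ (E₀ ∩ P i) := by
        ext u
        simp only [hA, Finset.mem_sdiff, Finset.mem_inter]
        tauto
      rw [this, Finset.card_sdiff_of_subset Finset.inter_subset_left, hH E₀ hE₀ i, hEcard E₀ hE₀]
    · intro E
      constructor
      · intro hE
        obtain ⟨v, hvP, hEv, _⟩ := hedge_form E hE
        exact ⟨v, Finset.mem_filter.2 ⟨hvP, hEv ▸ hE⟩, hEv⟩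
      · rintro ⟨v, hv, rfl⟩
        exact (Finset.mem_filter.1 hv).2
end



lemma empty_separable [Fintype V] [DecidableEq V] {k : ℕ} (hk : 1 ≤ k) :
    SeparableHypergraph k (∅ : Finset (Finset V)) := by
  refine ⟨fun _ => -1, fun E => ?_⟩
  simp only [Finset.notMem_empty, false_iff, not_and]
  intro hcard
  rw [Finset.sum_const, nsmul_eq_mul, hcard]
  intro h
  nlinarith [h, (by exact_mod_cast hk : (1:ℝ) ≤ (k:ℝ))]

lemma structure_separable [Fintype V] [DecidableEq V] {k : ℕ} (hk : 1 ≤ k)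
    {H : Finset (Finset V)} {A S : Finset V}
    (hAS : Disjoint A S) (hAcard : A.card = k - 1)
    (hiff : ∀ E, E ∈ H ↔ ∃ v ∈ S, E = insert v A) :
    SeparableHypergraph k H := by
  classical
  set x : V → ℝ := fun u => if u ∈ A then 1 else if u ∈ S then -((k:ℝ)-1) else -(k:ℝ) with hx
  refine ⟨x, fun E => ?_⟩
  constructor
  · intro hE
    obtain ⟨v, hvS, rfl⟩ := (hiff _).1 hE
    have hvA : v ∉ A := Finset.disjoint_right.1 hAS hvS
    constructor
    · rw [Finset.card_insert_of_notMem hvA, hAcard]; omega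
    · rw [Finset.sum_insert hvA]
      have h1 : ∀ u ∈ A, x u = 1 := fun u hu => by simp [hx, hu]
      rw [Finset.sum_congr rfl h1, Finset.sum_const, hAcard]
      have h2 : x v = -((k:ℝ)-1) := by simp [hx, hvA, hvS]
      rw [h2]
      have : ((k - 1 : ℕ) : ℝ) = (k:ℝ) - 1 := by
        have : (1:ℕ) ≤ k := hk
        push_cast [Nat.cast_sub this]; ring
      rw [nsmul_eq_mul, this]; linarith
  · rintro ⟨hcard, hsum⟩
    -- decompose E
    set T1 := E ∩ A with hT1
    set T2 := E ∩ S with hT2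
    set T3 := E \ (A ∪ S) with hT3
    have hd12 : Disjoint T1 T2 := hAS.mono inter_subset_right inter_subset_right
    have hd3 : Disjoint (T1 ∪ T2) T3 := by
      refine Finset.disjoint_left.2 fun u hu hu3 => ?_
      rw [hT3, Finset.mem_sdiff] at hu3
      rcases Finset.mem_union.1 hu with h | h
      · exact hu3.2 (Finset.mem_union_left _ (Finset.mem_of_mem_inter_right h))
      · exact hu3.2 (Finset.mem_union_right _ (Finset.mem_of_mem_inter_right h))
    have hEdecomp : E = (T1 ∪ T2) ∪ T3 := by
      ext u
      simp only [hT1, hT2, hT3, Finset.mem_union, Finset.mem_inter, Finset.mem_sdiff]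
      tauto
    have hcards : T1.card + T2.card + T3.card = k := by
      rw [← hcard, hEdecomp, Finset.card_union_of_disjoint hd3,
        Finset.card_union_of_disjoint hd12]
    have hsum' : ∑ u ∈ E, x u =
        (T1.card : ℝ) - T2.card * ((k:ℝ)-1) - T3.card * (k:ℝ) := by
      rw [hEdecomp, Finset.sum_union hd3, Finset.sum_union hd12]
      have h1 : ∑ u ∈ T1, x u = (T1.card : ℝ) := by
        rw [Finset.sum_congr rfl (fun u hu => show x u = (1:ℝ) by
          simp [hx, (Finset.mem_inter.1 hu).2]), Finset.sum_const, nsmul_eq_mul, mul_one]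
      have h2 : ∑ u ∈ T2, x u = -(T2.card * ((k:ℝ)-1)) := by
        rw [Finset.sum_congr rfl (fun u hu => show x u = -((k:ℝ)-1) by
          have huS := (Finset.mem_inter.1 hu).2
          have huA : u ∉ A := Finset.disjoint_right.1 hAS huS
          simp [hx, huA, huS]), Finset.sum_const, nsmul_eq_mul]
        ring
      have h3 : ∑ u ∈ T3, x u = -(T3.card * (k:ℝ)) := by
        rw [Finset.sum_congr rfl (fun u hu => show x u = -(k:ℝ) by
          have hu' := Finset.mem_sdiff.1 hu
          have huA : u ∉ A := fun h => hu'.2 (Finset.mem_union_left _ h)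
          have huS : u ∉ S := fun h => hu'.2 (Finset.mem_union_right _ h)
          simp [hx, huA, huS]), Finset.sum_const, nsmul_eq_mul]
        ring
      rw [h1, h2, h3]; ring
    have hT1le : T1.card ≤ k - 1 := hAcard ▸ Finset.card_le_card inter_subset_right
    -- derive nat inequality
    have hkR : (1:ℝ) ≤ (k:ℝ) := by exact_mod_cast hk
    rw [hsum'] at hsum
    have hnat : T2.card * (k-1) + T3.card * k ≤ T1.card := by
      have hest : (T2.card : ℝ) * ((k:ℝ)-1) + T3.card * k ≤ T1.card := by linarith
      have hcast : ((k-1:ℕ):ℝ) = (k:ℝ) - 1 := by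
        push_cast [Nat.cast_sub hk]; ring
      have : ((T2.card * (k-1) + T3.card * k : ℕ) : ℝ) ≤ (T1.card : ℝ) := by
        push_cast [hcast]; linarith
      exact_mod_cast this
    -- solve: T3 = 0, T2 = 1, T1 = k-1
    have hT3c : T3.card = 0 := by
      by_contra h
      have h1 : 1 ≤ T3.card := Nat.one_le_iff_ne_zero.2 h
      have h5 : 1 * k ≤ T3.card * k := Nat.mul_le_mul h1 (le_refl k)
      have h6 : 0 ≤ T2.card * (k-1) := Nat.zero_le _
      omega
    have hT2c : T2.card = 1 := by
      have h3 : T2.card * (k-1) ≤ T1.card := by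
        have := hnat
        omega
      have hge : 1 ≤ T2.card := by omega
      by_contra h
      have h2 : 2 ≤ T2.card := by omega
      have h4 : 2 * (k-1) ≤ T2.card * (k-1) := Nat.mul_le_mul h2 (le_refl (k-1))
      omega
    have hT1c : T1.card = k - 1 := by omega
    -- conclude E = insert v A with v ∈ S
    have hAsub : A ⊆ E := by
      have : T1 = A := Finset.eq_of_subset_of_card_le inter_subset_right (by omega)
      rw [← this]; exact inter_subset_left
    obtain ⟨v, hv⟩ := Finset.card_eq_one.1 hT2c
    have hv' : E ∩ S = {v} := by rw [← hT2]; exact hv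
    have hvE : v ∈ E ∧ v ∈ S := Finset.mem_inter.1 (by rw [hv']; exact Finset.mem_singleton_self v)
    have hvA : v ∉ A := Finset.disjoint_right.1 hAS hvE.2
    have hsub : insert v A ⊆ E := Finset.insert_subset hvE.1 hAsub
    have hEeq : insert v A = E := by
      refine Finset.eq_of_subset_of_card_le hsub ?_
      rw [Finset.card_insert_of_notMem hvA, hAcard, hcard]; omega
    exact (hiff E).2 ⟨v, hvE.2, hEeq.symm⟩




lemma exch_equatable [Fintype V] [DecidableEq V] {k : ℕ} (hk : 1 ≤ k)
    {H : Finset (Finset V)}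
    (hEcard : ∀ E ∈ H, E.card = k)
    (hex : ExchangeableHypergraph H) : EquatableHypergraph k H := by
  obtain ⟨E₁, hE₁, E₂, hE₂, v₁, hv₁, v₂, hv₂, hF₁, hF₂⟩ := hex
  rw [Finset.mem_sdiff] at hv₁ hv₂
  set F₁ := insert v₂ (E₁.erase v₁) with hF₁def
  set F₂ := insert v₁ (E₂.erase v₂) with hF₂def
  have hne12 : v₁ ≠ v₂ := fun h => hv₂.2 (h ▸ hv₁.1)
  have hcE₁ : E₁.card = k := hEcard E₁ hE₁
  have hcE₂ : E₂.card = k := hEcard E₂ hE₂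
  have hv₂e : v₂ ∉ E₁.erase v₁ := fun h => hv₂.2 (Finset.mem_of_mem_erase h)
  have hv₁e : v₁ ∉ E₂.erase v₂ := fun h => hv₁.2 (Finset.mem_of_mem_erase h)
  have hcF₁ : F₁.card = k := by
    rw [hF₁def, Finset.card_insert_of_notMem hv₂e, Finset.card_erase_of_mem hv₁.1, hcE₁]
    omega
  have hcF₂ : F₂.card = k := by
    rw [hF₂def, Finset.card_insert_of_notMem hv₁e, Finset.card_erase_of_mem hv₂.1, hcE₂]
    omega
  set y : Finset V → ℝ := fun G =>
    (if G = E₁ then 1 else 0) + (if G = E₂ then 1 else 0) +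
    (if G = F₁ then 1 else 0) + (if G = F₂ then 1 else 0) with hy
  have hsum : ∀ T : Finset (Finset V), ∑ G ∈ T, y G =
      (if E₁ ∈ T then (1:ℝ) else 0) + (if E₂ ∈ T then 1 else 0) +
      (if F₁ ∈ T then 1 else 0) + (if F₂ ∈ T then 1 else 0) := by
    intro T
    simp only [hy, Finset.sum_add_distrib, Finset.sum_ite_eq' T]
  refine ⟨y, ?_, ?_, ?_⟩
  · intro G; simp only [hy]; positivity
  · refine ⟨E₁, Finset.mem_powersetCard.2 ⟨Finset.subset_univ _, hcE₁⟩, ?_⟩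
    have h1 : (1:ℝ) ≤ y E₁ := by
      simp only [hy]
      split_ifs <;> norm_num
    intro h; rw [h] at h1; linarith
  · intro v
    have hmemE : ∀ E : Finset V, E.card = k → E ∈ H →
        ((E ∈ ((univ : Finset V).powersetCard k).filter (fun E => v ∈ E ∧ E ∈ H)) ↔ (v ∈ E)) := by
      intro E hc hEH
      simp [Finset.mem_filter, Finset.mem_powersetCard, hc, hEH]
    have hmemF : ∀ F : Finset V, F.card = k → F ∉ H →
        ((F ∈ ((univ : Finset V).powersetCard k).filter (fun F => v ∈ F ∧ F ∉ H)) ↔ (v ∈ F)) := by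
      intro F hc hFH
      simp [Finset.mem_filter, Finset.mem_powersetCard, hc, hFH]
    rw [hsum, hsum]
    have hF₁T : F₁ ∉ ((univ : Finset V).powersetCard k).filter (fun E => v ∈ E ∧ E ∈ H) := by
      simp only [Finset.mem_filter]; tauto
    have hF₂T : F₂ ∉ ((univ : Finset V).powersetCard k).filter (fun E => v ∈ E ∧ E ∈ H) := by
      simp only [Finset.mem_filter]; tauto
    have hE₁T : E₁ ∉ ((univ : Finset V).powersetCard k).filter (fun F => v ∈ F ∧ F ∉ H) := by
      simp only [Finset.mem_filter]; tauto
    have hE₂T : E₂ ∉ ((univ : Finset V).powersetCard k).filter (fun F => v ∈ F ∧ F ∉ H) := by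
      simp only [Finset.mem_filter]; tauto
    have ie1 := if_congr (hmemE E₁ hcE₁ hE₁) (rfl : (1:ℝ) = 1) (rfl : (0:ℝ) = 0)
    have ie2 := if_congr (hmemE E₂ hcE₂ hE₂) (rfl : (1:ℝ) = 1) (rfl : (0:ℝ) = 0)
    have if1 := if_congr (hmemF F₁ hcF₁ hF₁) (rfl : (1:ℝ) = 1) (rfl : (0:ℝ) = 0)
    have if2 := if_congr (hmemF F₂ hcF₂ hF₂) (rfl : (1:ℝ) = 1) (rfl : (0:ℝ) = 0)
    rw [if_neg hF₁T, if_neg hF₂T, if_neg hE₁T, if_neg hE₂T, ie1, ie2, if1, if2]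
    by_cases h1 : v = v₁
    · subst h1
      have : v ∉ F₁ := by
        simp only [hF₁def, Finset.mem_insert, Finset.mem_erase]
        push_neg
        exact ⟨hne12, fun h => absurd rfl h⟩
      have h2 : v ∈ F₂ := Finset.mem_insert_self _ _
      simp [hv₁.1, hv₁.2, this, h2]
      
    · by_cases h2 : v = v₂
      · subst h2
        have : v ∉ F₂ := by
          simp only [hF₂def, Finset.mem_insert, Finset.mem_erase]
          push_neg
          exact ⟨hne12.symm, fun h => absurd rfl h⟩
        have h3 : v ∈ F₁ := Finset.mem_insert_self _ _
        simp [hv₂.1, hv₂.2, this, h3]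
      · have e1 : (v ∈ F₁) ↔ (v ∈ E₁) := by
          simp [hF₁def, Finset.mem_insert, Finset.mem_erase, h1, h2]
        have e2 : (v ∈ F₂) ↔ (v ∈ E₂) := by
          simp [hF₂def, Finset.mem_insert, Finset.mem_erase, h1, h2]
        rw [if_congr e1 (rfl : (1:ℝ) = 1) (rfl : (0:ℝ) = 0),
          if_congr e2 (rfl : (1:ℝ) = 1) (rfl : (0:ℝ) = 0)]
        ring

lemma separable_not_equatable [Fintype V] [DecidableEq V] {k : ℕ} (hk : 1 ≤ k)
    {H : Finset (Finset V)} (hs : SeparableHypergraph k H) : ¬ EquatableHypergraph k H := by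
  obtain ⟨x, hx⟩ := hs
  rintro ⟨y, hy0, ⟨G, hGk, hGne⟩, hbal⟩
  set K := (univ : Finset V).powersetCard k with hK
  have hfil : ∀ (p : Finset V → Prop) [DecidablePred p] (v : V),
      K.filter (fun E => v ∈ E ∧ p E) = (K.filter p).filter (fun E => v ∈ E) := by
    intro p _ v
    rw [Finset.filter_filter]
    exact Finset.filter_congr (fun E _ => by tauto)
  -- key sum identity
  have hsum : ∑ E ∈ K.filter (· ∈ H), y E * ∑ v ∈ E, x v =
      ∑ F ∈ K.filter (· ∉ H), y F * ∑ v ∈ F, x v := by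
    rw [← double_sum x y, ← double_sum x y]
    refine Finset.sum_congr rfl fun v _ => ?_
    rw [← hfil (· ∈ H) v, ← hfil (· ∉ H) v, hbal v]
  have hcardK : ∀ F ∈ K, F.card = k := fun F hF => (Finset.mem_powersetCard.1 hF).2
  have hnonneg : ∀ E ∈ K.filter (· ∈ H), 0 ≤ y E * ∑ v ∈ E, x v := by
    intro E hE
    rw [Finset.mem_filter] at hE
    exact mul_nonneg (hy0 E) ((hx E).1 hE.2).2
  have hneg : ∀ F ∈ K.filter (· ∉ H), ∑ v ∈ F, x v < 0 := by
    intro F hF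
    rw [Finset.mem_filter] at hF
    by_contra h
    exact hF.2 ((hx F).2 ⟨hcardK F hF.1, not_lt.1 h⟩)
  have hnonpos : ∀ F ∈ K.filter (· ∉ H), y F * ∑ v ∈ F, x v ≤ 0 := fun F hF =>
    mul_nonpos_of_nonneg_of_nonpos (hy0 F) (hneg F hF).le
  have h0 : ∑ F ∈ K.filter (· ∉ H), y F * ∑ v ∈ F, x v = 0 := by
    have h1 : 0 ≤ ∑ F ∈ K.filter (· ∉ H), y F * ∑ v ∈ F, x v := by
      rw [← hsum]; exact Finset.sum_nonneg hnonneg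
    have h2 : ∑ F ∈ K.filter (· ∉ H), y F * ∑ v ∈ F, x v ≤ 0 := Finset.sum_nonpos hnonpos
    linarith
  have hyF0 : ∀ F ∈ K, F ∉ H → y F = 0 := by
    intro F hF hFH
    have hmem : F ∈ K.filter (· ∉ H) := Finset.mem_filter.2 ⟨hF, hFH⟩
    have := (Finset.sum_eq_zero_iff_of_nonpos hnonpos).1 h0 F hmem
    rcases mul_eq_zero.1 this with h | h
    · exact h
    · exact absurd h (hneg F hmem).ne
  have hyE0 : ∀ E ∈ K, E ∈ H → y E = 0 := by
    intro E hE hEH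
    have hcard : E.card = k := hcardK E hE
    have hne : E.Nonempty := by
      rw [← Finset.card_pos, hcard]; omega
    obtain ⟨v, hv⟩ := hne
    have hrhs : ∑ F ∈ K.filter (fun F => v ∈ F ∧ F ∉ H), y F = 0 :=
      Finset.sum_eq_zero fun F hF => by
        rw [Finset.mem_filter] at hF
        exact hyF0 F hF.1 hF.2.2
    have hlhs : ∑ E' ∈ K.filter (fun E' => v ∈ E' ∧ E' ∈ H), y E' = 0 := by
      rw [hbal v, hrhs]
    have hnn : ∀ E' ∈ K.filter (fun E' => v ∈ E' ∧ E' ∈ H), 0 ≤ y E' := fun E' _ => hy0 E'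
    exact (Finset.sum_eq_zero_iff_of_nonneg hnn).1 hlhs E
      (Finset.mem_filter.2 ⟨hE, hv, hEH⟩)
  by_cases hGH : G ∈ H
  · exact hGne (hyE0 G hGk hGH)
  · exact hGne (hyF0 G hGk hGH)

end AuxLemmas

/-- A k-partite hypergraph is equatable iff it is exchangeable. -/
theorem multipartite_equatable_iff_exchangeable [Fintype V] [DecidableEq V]
    (k : ℕ) (H : Finset (Finset V)) (P : Fin k → Finset V)
    (hk : 1 ≤ k) (hkn : k < Fintype.card V)
    (hdisj : ∀ i j, i ≠ j → Disjoint (P i) (P j))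
    (hcover : ∀ v : V, ∃ i, v ∈ P i)
    (hH : ∀ E ∈ H, ∀ i, (E ∩ P i).card = 1) :
    EquatableHypergraph k H ↔ ExchangeableHypergraph H := by
  have hEcard : ∀ E ∈ H, E.card = k := fun E hE => edge_card_aux hdisj hcover (hH E hE)
  constructor
  · intro heq
    by_contra hnex
    refine absurd heq (separable_not_equatable hk ?_)
    rcases Finset.eq_empty_or_nonempty H with rfl | hne
    · exact empty_separable hk
    · obtain ⟨A, S, hAS, hAcard, hiff⟩ :=
        nonexch_structure hdisj hcover hH hk hEcard hne hnex
      exact structure_separable hk hAS hAcard hiff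
  · exact fun hex => exch_equatable hk hEcard hex
end

section
/- If in a k-partite hypergraph (V₁ ⊎ ⋯ ⊎ V_k, H) with k ≥ 2 there exist edges E₁, E₂ ∈ H with |E₁ ∩ E₂| ≤ k − 2, then the hypergraph is exchangeable. -/
open Finset

variable {V : Type*}

/-- In a k-partite hypergraph, two edges meeting in at most k-2 vertices force
exchangeability. -/
theorem multipartite_exchangeable_of_small_intersection [Fintype V] [DecidableEq V]
    (k : ℕ) (H : Finset (Finset V)) (P : Fin k → Finset V)
    (hk : 2 ≤ k)
    (hdisj : ∀ i j, i ≠ j → Disjoint (P i) (P j))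
    (hcover : ∀ v : V, ∃ i, v ∈ P i)
    (hH : ∀ E ∈ H, ∀ i, (E ∩ P i).card = 1)
    (E₁ E₂ : Finset V) (hE₁ : E₁ ∈ H) (hE₂ : E₂ ∈ H)
    (hcap : (E₁ ∩ E₂).card ≤ k - 2) :
    ExchangeableHypergraph H := by
  classical
  choose a ha using fun i => Finset.card_eq_one.mp (hH E₁ hE₁ i)
  choose b hb using fun i => Finset.card_eq_one.mp (hH E₂ hE₂ i)
  have haE : ∀ i, a i ∈ E₁ ∧ a i ∈ P i := fun i => by
    have h : a i ∈ E₁ ∩ P i := by rw [ha i]; exact Finset.mem_singleton_self _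
    exact Finset.mem_inter.mp h
  have hbE : ∀ i, b i ∈ E₂ ∧ b i ∈ P i := fun i => by
    have h : b i ∈ E₂ ∩ P i := by rw [hb i]; exact Finset.mem_singleton_self _
    exact Finset.mem_inter.mp h
  set S := univ.filter (fun i : Fin k => a i = b i) with hSdef
  have hScard : S.card ≤ (E₁ ∩ E₂).card := by
    apply Finset.card_le_card_of_injOn (fun i => a i)
    · intro i hi
      have hab : a i = b i := (Finset.mem_filter.mp hi).2
      exact Finset.mem_inter.mpr ⟨(haE i).1, (hab ▸ (hbE i).1 : a i ∈ E₂)⟩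
    · intro i _ j _ hij
      by_contra hne
      have hij' : a i = a j := hij
      have : a i ∈ P j := by rw [hij']; exact (haE j).2
      exact Finset.disjoint_left.mp (hdisj i j hne) (haE i).2 this
  set T := univ.filter (fun i : Fin k => ¬ a i = b i) with hTdef
  have hsum : S.card + T.card = k := by
    rw [hSdef, hTdef, Finset.card_filter_add_card_filter_not]
    simp
  have hT2 : 1 < T.card := by omega
  obtain ⟨i, hi, j, hj, hij⟩ := Finset.one_lt_card.mp hT2
  have hiab : a i ≠ b i := (Finset.mem_filter.mp hi).2
  have hjab : a j ≠ b j := (Finset.mem_filter.mp hj).2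
  refine ⟨E₁, hE₁, E₂, hE₂, a i, ?_, b j, ?_, ?_, ?_⟩
  · refine Finset.mem_sdiff.mpr ⟨(haE i).1, fun hmem => hiab ?_⟩
    have : a i ∈ E₂ ∩ P i := Finset.mem_inter.mpr ⟨hmem, (haE i).2⟩
    rw [hb i] at this
    exact Finset.mem_singleton.mp this
  · refine Finset.mem_sdiff.mpr ⟨(hbE j).1, fun hmem => hjab ?_⟩
    have : b j ∈ E₁ ∩ P j := Finset.mem_inter.mpr ⟨hmem, (hbE j).2⟩
    rw [ha j] at this
    exact (Finset.mem_singleton.mp this).symm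
  · intro hF
    have hcard := hH _ hF i
    have hempty : (insert (b j) (E₁.erase (a i))) ∩ P i = ∅ := by
      apply Finset.eq_empty_of_forall_notMem
      intro x hx
      obtain ⟨hx1, hx2⟩ := Finset.mem_inter.mp hx
      rcases Finset.mem_insert.mp hx1 with h | h
      · subst h
        exact Finset.disjoint_left.mp (hdisj j i hij.symm) (hbE j).2 hx2
      · have hxE : x ∈ E₁ ∩ P i := Finset.mem_inter.mpr ⟨Finset.mem_of_mem_erase h, hx2⟩
        rw [ha i] at hxE
        exact (Finset.ne_of_mem_erase h) (Finset.mem_singleton.mp hxE)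
    rw [hempty] at hcard
    simp at hcard
  · intro hF
    have hcard := hH _ hF j
    have hempty : (insert (a i) (E₂.erase (b j))) ∩ P j = ∅ := by
      apply Finset.eq_empty_of_forall_notMem
      intro x hx
      obtain ⟨hx1, hx2⟩ := Finset.mem_inter.mp hx
      rcases Finset.mem_insert.mp hx1 with h | h
      · subst h
        exact Finset.disjoint_left.mp (hdisj i j hij) (haE i).2 hx2
      · have hxE : x ∈ E₂ ∩ P j := Finset.mem_inter.mpr ⟨Finset.mem_of_mem_erase h, hx2⟩
        rw [hb j] at hxE
        exact (Finset.ne_of_mem_erase h) (Finset.mem_singleton.mp hxE)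
    rw [hempty] at hcard
    simp at hcard
end

section
/- Let (V,H) be a matroid with no loops that has at least two distinct nontrivial lines. Then (V,H) is exchangeable: there are bases E₁, E₂ ∈ H and v₁ ∈ E₁ \ E₂, v₂ ∈ E₂ \ E₁ such that (E₁ \ {v₁}) ∪ {v₂} and (E₂ \ {v₂}) ∪ {v₁} are both non-bases. -/
open Finset

variable {V : Type*}

/-- A pair of distinct vertices is independent if it is contained in some basis. -/
def PairIndep [DecidableEq V] (H : Finset (Finset V)) (u v : V) : Prop :=
  ∃ E ∈ H, u ∈ E ∧ v ∈ E

/-- A line: pairs inside it are dependent, pairs leaving it are independent. -/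
def IsLine [DecidableEq V] (H : Finset (Finset V)) (L : Finset V) : Prop :=
  L.Nonempty ∧ (∀ u ∈ L, ∀ w ∈ L, u ≠ w → ¬ PairIndep H u w) ∧
    (∀ u ∈ L, ∀ w : V, w ∉ L → PairIndep H u w)

/-- A loopless matroid with at least two distinct nontrivial lines is exchangeable. -/
theorem exchangeable_of_two_lines [Fintype V] [DecidableEq V]
    (k : ℕ) (H : Finset (Finset V))
    (hk : 2 ≤ k)
    (hH : ∀ E ∈ H, E.card = k) (hne : H.Nonempty)
    (hbex : ∀ E₁ ∈ H, ∀ E₂ ∈ H, ∀ v₁ ∈ E₁ \ E₂,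
      ∃ v₂ ∈ E₂ \ E₁, insert v₂ (E₁.erase v₁) ∈ H)
    (hloopless : ∀ v : V, ∃ E ∈ H, v ∈ E)
    (L₁ L₂ : Finset V) (hL₁ : IsLine H L₁) (hL₂ : IsLine H L₂) (hLne : L₁ ≠ L₂)
    (hL₁nt : 2 ≤ L₁.card) (hL₂nt : 2 ≤ L₂.card) :
    ExchangeableHypergraph H := by
  obtain ⟨a, ha, a', ha', haa'⟩ := Finset.one_lt_card.mp hL₁nt
  obtain ⟨b, hb, b', hb', hbb'⟩ := Finset.one_lt_card.mp hL₂nt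
  -- distinct lines are disjoint
  have hdisj : ∀ u, u ∈ L₁ → u ∉ L₂ := by
    intro u hu1 hu2
    apply hLne
    ext w
    constructor
    · intro hw1
      by_contra hw2
      exact hL₁.2.1 u hu1 w hw1 (fun h => hw2 (h ▸ hu2)) (hL₂.2.2 u hu2 w hw2)
    · intro hw2
      by_contra hw1
      exact hL₂.2.1 u hu2 w hw2 (fun h => hw1 (h ▸ hu1)) (hL₁.2.2 u hu1 w hw1)
  have hbL1 : b ∉ L₁ := fun h => hdisj b h hb
  have hb'L1 : b' ∉ L₁ := fun h => hdisj b' h hb'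
  obtain ⟨E₁, hE₁, haE₁, hbE₁⟩ := hL₁.2.2 a ha b hbL1
  obtain ⟨E₂, hE₂, ha'E₂, hb'E₂⟩ := hL₁.2.2 a' ha' b' hb'L1
  have haE₂ : a ∉ E₂ := fun h => hL₁.2.1 a ha a' ha' haa' ⟨E₂, hE₂, h, ha'E₂⟩
  have hb'E₁ : b' ∉ E₁ := fun h => hL₂.2.1 b hb b' hb' hbb' ⟨E₁, hE₁, hbE₁, h⟩
  have hab : a ≠ b := fun h => hbL1 (h ▸ ha)
  have ha'b' : a' ≠ b' := fun h => hb'L1 (h ▸ ha')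
  refine ⟨E₁, hE₁, E₂, hE₂, a, Finset.mem_sdiff.mpr ⟨haE₁, haE₂⟩,
    b', Finset.mem_sdiff.mpr ⟨hb'E₂, hb'E₁⟩, ?_, ?_⟩
  · intro h
    exact hL₂.2.1 b hb b' hb' hbb'
      ⟨_, h, Finset.mem_insert_of_mem (Finset.mem_erase.mpr ⟨hab.symm, hbE₁⟩),
        Finset.mem_insert_self _ _⟩
  · intro h
    exact hL₁.2.1 a ha a' ha' haa'
      ⟨_, h, Finset.mem_insert_self _ _,
        Finset.mem_insert_of_mem (Finset.mem_erase.mpr ⟨ha'b', ha'E₂⟩)⟩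
end

section
/- Every separable k-hypergraph is r-monotone for all r: if (V,H) admits a labeling x : V → ℝ with H = {E : |E| = k, ∑_{v∈E} x(v) ≥ 0}, then for any R₁, R₂ ⊆ V with |R₁| = |R₂|, either R₁ ≤ R₂ or R₂ ≤ R₁, where R₁ ≤ R₂ means that S ∪ R₁ ∈ H implies S ∪ R₂ ∈ H for all S ⊆ V \ (R₁ ∪ R₂) with |S ∪ R₁| = k. -/
open Finset

variable {V : Type*}

/-- Every separable k-hypergraph is r-monotone for all r: for any equal-cardinality
R₁, R₂ one of R₁ ≤ R₂ or R₂ ≤ R₁ holds. -/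
theorem separable_monotone [Fintype V] [DecidableEq V]
    (k : ℕ) (H : Finset (Finset V))
    (hk : 1 ≤ k) (hkn : k < Fintype.card V)
    (x : V → ℝ) (hx : ∀ E : Finset V, E ∈ H ↔ E.card = k ∧ 0 ≤ ∑ v ∈ E, x v) :
    ∀ R₁ R₂ : Finset V, R₁.card = R₂.card →
      (∀ S : Finset V, S ⊆ (R₁ ∪ R₂)ᶜ → (S ∪ R₁).card = k → S ∪ R₁ ∈ H → S ∪ R₂ ∈ H) ∨
      (∀ S : Finset V, S ⊆ (R₁ ∪ R₂)ᶜ → (S ∪ R₂).card = k → S ∪ R₂ ∈ H → S ∪ R₁ ∈ H) := by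
  have key : ∀ R₁ R₂ : Finset V, R₁.card = R₂.card →
      ∑ v ∈ R₁, x v ≤ ∑ v ∈ R₂, x v →
      ∀ S : Finset V, S ⊆ (R₁ ∪ R₂)ᶜ → (S ∪ R₁).card = k → S ∪ R₁ ∈ H → S ∪ R₂ ∈ H := by
    intro R₁ R₂ hcard hsum S hS _ hmem
    have hd1 : Disjoint S R₁ := by
      refine disjoint_left.mpr fun a ha ha1 => ?_
      have := hS ha
      simp [Finset.mem_compl, Finset.mem_union] at this
      exact this.1 ha1
    have hd2 : Disjoint S R₂ := by
      refine disjoint_left.mpr fun a ha ha2 => ?_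
      have := hS ha
      simp [Finset.mem_compl, Finset.mem_union] at this
      exact this.2 ha2
    rw [hx] at hmem ⊢
    obtain ⟨hc, hs⟩ := hmem
    rw [Finset.card_union_of_disjoint hd1] at hc
    rw [Finset.sum_union hd1] at hs
    refine ⟨by rw [Finset.card_union_of_disjoint hd2, ← hcard]; exact hc, ?_⟩
    rw [Finset.sum_union hd2]
    linarith
  intro R₁ R₂ hcard
  rcases le_total (∑ v ∈ R₁, x v) (∑ v ∈ R₂, x v) with h | h
  · exact Or.inl (key R₁ R₂ hcard h)
  · right
    have := key R₂ R₁ hcard.symm h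
    simpa [Finset.union_comm R₂ R₁] using this
end

section
/- A k-hypergraph (V,H) is 2-monotone if and only if it is not exchangeable. That is, for all pairs of distinct vertices with |R₁ ∪ R₂| ≤ 2 either R₁ ≤ R₂ or R₂ ≤ R₁ holds if and only if there do not exist E₁, E₂ ∈ H and v₁ ∈ E₁ \ E₂, v₂ ∈ E₂ \ E₁ with (E₁ \ {v₁}) ∪ {v₂} ∉ H and (E₂ \ {v₂}) ∪ {v₁} ∉ H. -/
open Finset

variable {V : Type*}

lemma myUnionSingleton [DecidableEq V] (s : Finset V) (a : V) :
    s ∪ {a} = insert a s := by ext x; simp [or_comm]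

lemma myMemComplPair [Fintype V] [DecidableEq V] {x v₁ v₂ : V}
    (h : x ∈ ({v₁} ∪ {v₂} : Finset V)ᶜ) : x ≠ v₁ ∧ x ≠ v₂ := by
  simp only [mem_compl, mem_union, mem_singleton, not_or] at h
  exact h

/-- A k-hypergraph is 2-monotone iff it is not exchangeable. -/
theorem two_monotone_iff_not_exchangeable [Fintype V] [DecidableEq V]
    (k : ℕ) (H : Finset (Finset V))
    (hk : 1 ≤ k) (hkn : k < Fintype.card V) (hH : ∀ E ∈ H, E.card = k) :
    (∀ R₁ R₂ : Finset V, R₁.card = R₂.card → (R₁ ∪ R₂).card ≤ 2 →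
      (∀ S : Finset V, S ⊆ (R₁ ∪ R₂)ᶜ → S ∪ R₁ ∈ H → S ∪ R₂ ∈ H) ∨
      (∀ S : Finset V, S ⊆ (R₁ ∪ R₂)ᶜ → S ∪ R₂ ∈ H → S ∪ R₁ ∈ H)) ↔
    ¬ ExchangeableHypergraph H := by
  constructor
  · rintro h ⟨E₁, hE₁, E₂, hE₂, v₁, hv₁, v₂, hv₂, h₁, h₂⟩
    simp only [mem_sdiff] at hv₁ hv₂
    rcases h {v₁} {v₂} (by simp)
        (le_trans (card_union_le _ _) (by simp)) with h' | h'
    · apply h₁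
      have hsub : E₁.erase v₁ ⊆ ({v₁} ∪ {v₂} : Finset V)ᶜ := by
        intro x hx
        simp only [mem_erase] at hx
        simp only [mem_compl, mem_union, mem_singleton, not_or]
        exact ⟨hx.1, fun hxe => hv₂.2 (hxe ▸ hx.2)⟩
      have := h' (E₁.erase v₁) hsub (by
        rw [myUnionSingleton, insert_erase hv₁.1]; exact hE₁)
      rwa [myUnionSingleton] at this
    · apply h₂
      have hsub : E₂.erase v₂ ⊆ ({v₁} ∪ {v₂} : Finset V)ᶜ := by
        intro x hx
        simp only [mem_erase] at hx
        simp only [mem_compl, mem_union, mem_singleton, not_or]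
        exact ⟨fun hxe => hv₁.2 (hxe ▸ hx.2), hx.1⟩
      have := h' (E₂.erase v₂) hsub (by
        rw [myUnionSingleton, insert_erase hv₂.1]; exact hE₂)
      rwa [myUnionSingleton] at this
  · intro hne R₁ R₂ hcard hunion
    by_contra hcon
    push_neg at hcon
    obtain ⟨⟨S₁, hS₁sub, hS₁in, hS₁out⟩, ⟨S₂, hS₂sub, hS₂in, hS₂out⟩⟩ := hcon
    have hne12 : R₁ ≠ R₂ := by rintro rfl; exact hS₁out hS₁in
    have hle : R₁.card ≤ 2 := le_trans (card_le_card subset_union_left) hunion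
    have hc1 : R₁.card = 1 := by
      rcases Nat.eq_zero_or_pos R₁.card with h0 | hpos
      · exfalso
        have h2 : R₂.card = 0 := by omega
        exact hne12 ((card_eq_zero.mp h0).trans (card_eq_zero.mp h2).symm)
      · by_contra hne1
        have hc2 : R₁.card = 2 := by omega
        have h1 : R₁ = R₁ ∪ R₂ :=
          eq_of_subset_of_card_le subset_union_left (hc2 ▸ hunion)
        have h2 : R₂ = R₁ ∪ R₂ :=
          eq_of_subset_of_card_le subset_union_right
            (by rw [← hcard, hc2]; exact hunion)
        exact hne12 (h1.trans h2.symm)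
    obtain ⟨v₁, rfl⟩ := card_eq_one.mp hc1
    obtain ⟨v₂, rfl⟩ := card_eq_one.mp (hcard ▸ hc1)
    have hv12 : v₁ ≠ v₂ := by simpa using hne12
    have hv₁S₁ : v₁ ∉ S₁ := fun h => (myMemComplPair (hS₁sub h)).1 rfl
    have hv₂S₁ : v₂ ∉ S₁ := fun h => (myMemComplPair (hS₁sub h)).2 rfl
    have hv₁S₂ : v₁ ∉ S₂ := fun h => (myMemComplPair (hS₂sub h)).1 rfl
    have hv₂S₂ : v₂ ∉ S₂ := fun h => (myMemComplPair (hS₂sub h)).2 rfl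
    apply hne
    refine ⟨S₁ ∪ {v₁}, hS₁in, S₂ ∪ {v₂}, hS₂in, v₁, ?_, v₂, ?_, ?_, ?_⟩
    · rw [myUnionSingleton, myUnionSingleton, mem_sdiff]
      constructor
      · exact mem_insert_self _ _
      · simp only [mem_insert]
        rintro (h | h)
        · exact hv12 h
        · exact hv₁S₂ h
    · rw [myUnionSingleton, myUnionSingleton, mem_sdiff]
      constructor
      · exact mem_insert_self _ _
      · simp only [mem_insert]
        rintro (h | h)
        · exact hv12 h.symm
        · exact hv₂S₁ h
    · have he : (S₁ ∪ {v₁}).erase v₁ = S₁ := by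
        rw [myUnionSingleton, erase_insert hv₁S₁]
      rw [he, ← myUnionSingleton]
      exact hS₁out
    · have he : (S₂ ∪ {v₂}).erase v₂ = S₂ := by
        rw [myUnionSingleton, erase_insert hv₂S₂]
      rw [he, ← myUnionSingleton]
      exact hS₂out
end

section
/- The 3-hypergraph on V = {1,…,9} with H = {ij9 : i < j < 9, 1 ≤ i, 4 ≤ j} ∪ {ijk : i < j < k, 2 ≤ i, 5 ≤ j, 7 ≤ k} is equatable (a witness is the {0,1} labeling y with y(G) = 1 exactly for G ∈ {149, 178, 239, 267, 358, 456}) but is not exchangeable. -/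
open Finset

set_option maxHeartbeats 4000000
set_option maxRecDepth 100000

/-- The edge set of the example hypergraph, listed explicitly. -/
def HL : Finset (Finset ℕ) :=
    {{7,8,9},{6,8,9},{6,7,9},{6,7,8},{5,8,9},{5,7,9},{5,7,8},{5,6,9},{5,6,8},{5,6,7},
     {4,8,9},{4,7,9},{4,7,8},{4,6,9},{4,6,8},{4,6,7},{4,5,9},{4,5,8},{4,5,7},
     {3,8,9},{3,7,9},{3,7,8},{3,6,9},{3,6,8},{3,6,7},{3,5,9},{3,5,8},{3,5,7},{3,4,9},
     {2,8,9},{2,7,9},{2,7,8},{2,6,9},{2,6,8},{2,6,7},{2,5,9},{2,5,8},{2,5,7},{2,4,9},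
     {1,8,9},{1,7,9},{1,6,9},{1,5,9},{1,4,9}}

lemma HL_eq : (((Finset.Icc 1 9).powersetCard 3).filter (fun G =>
      ∃ i ∈ G, ∃ j ∈ G, ∃ k ∈ G, i < j ∧ j < k ∧
        ((k = 9 ∧ 1 ≤ i ∧ 4 ≤ j) ∨ (2 ≤ i ∧ 5 ≤ j ∧ 7 ≤ k))) : Finset (Finset ℕ)) = HL := by
  decide

/-- HL is closed under replacing a vertex of an edge by a larger vertex of V. -/
lemma HL_up_closed : ∀ E ∈ HL, ∀ v ∈ E, ∀ w ∈ Finset.Icc 1 9, w ∉ E → v < w →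
    insert w (E.erase v) ∈ HL := by decide

/-- The 3-hypergraph on {1,…,9} from Rudeanu et al.: it is equatable, witnessed by the
indicated 0,1 labeling, but not exchangeable. -/
theorem example_equatable_not_exchangeable :
    let V : Finset ℕ := Finset.Icc 1 9
    let H : Finset (Finset ℕ) := (V.powersetCard 3).filter (fun G =>
      ∃ i ∈ G, ∃ j ∈ G, ∃ k ∈ G, i < j ∧ j < k ∧
        ((k = 9 ∧ 1 ≤ i ∧ 4 ≤ j) ∨ (2 ≤ i ∧ 5 ≤ j ∧ 7 ≤ k)))
    let y : Finset ℕ → ℝ := fun G =>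
      if G = {1,4,9} ∨ G = {1,7,8} ∨ G = {2,3,9} ∨ G = {2,6,7} ∨ G = {3,5,8} ∨ G = {4,5,6}
        then 1 else 0
    ((∀ G, 0 ≤ y G) ∧ (∃ G ∈ V.powersetCard 3, y G ≠ 0) ∧
      ∀ v ∈ V, ∑ E ∈ (V.powersetCard 3).filter (fun E => v ∈ E ∧ E ∈ H), y E =
        ∑ F ∈ (V.powersetCard 3).filter (fun F => v ∈ F ∧ F ∉ H), y F) ∧
    ¬ (∃ E₁ ∈ H, ∃ E₂ ∈ H, ∃ v₁ ∈ E₁ \ E₂, ∃ v₂ ∈ E₂ \ E₁,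
        insert v₂ (E₁.erase v₁) ∉ H ∧ insert v₁ (E₂.erase v₂) ∉ H) := by
  intro V H y
  have hH : H = HL := HL_eq
  refine ⟨⟨fun G => ?_, ⟨{1,4,9}, by decide, by norm_num [y]⟩, ?_⟩, ?_⟩
  · dsimp only [y]; split <;> norm_num
  · intro v hv
    dsimp only [y]
    rw [Finset.sum_boole, Finset.sum_boole, Nat.cast_inj]
    simp only [hH]
    fin_cases hv <;> decide
  · rintro ⟨E₁, hE₁, E₂, hE₂, v₁, hv₁, v₂, hv₂, h₁, h₂⟩
    rw [Finset.mem_sdiff] at hv₁ hv₂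
    rw [hH] at hE₁ hE₂ h₁ h₂
    have hs₁ : E₁ ⊆ Finset.Icc 1 9 := by
      have := (Finset.mem_filter.mp (HL_eq ▸ hE₁)).1
      exact (Finset.mem_powersetCard.mp this).1
    have hs₂ : E₂ ⊆ Finset.Icc 1 9 := by
      have := (Finset.mem_filter.mp (HL_eq ▸ hE₂)).1
      exact (Finset.mem_powersetCard.mp this).1
    rcases lt_trichotomy v₁ v₂ with h | h | h
    · exact h₁ (HL_up_closed E₁ hE₁ v₁ hv₁.1 v₂ (hs₂ hv₂.1) hv₂.2 h)
    · exact hv₁.2 (h ▸ hv₂.1)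
    · exact h₂ (HL_up_closed E₂ hE₂ v₂ hv₂.1 v₁ (hs₁ hv₁.1) hv₁.2 h)
end
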